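/- arXiv:1602.01513 — 7 statements merged into one kernel-verified Lean document; each statement's English description precedes it below -/
import Mathlib

section
/- The maximum value of ∑_{n=1}^∞ (-1)^n ε_n/(d₁⋯d_n) over all digit sequences (ε_n) with ε_n ∈ {0,…,d_n−1} equals a₀ = ∑_{n=1}^∞ (-1)^{n+1}/(d₁⋯d_n), attained by the sequence with ε_{2k−1} = 0 and ε_{2k} = d_{2k}−1 for all k. -/
/-!
Term by term, the series is largest when the digits multiplying a negative sign vanish and those
multiplying a positive sign are maximal, so this digit sequence attains the maximum. Its value is
`a₀`: subtracting the series of `a₀`, the `(2k-1)`-st and `2k`-th differences are `-1/(d₁⋯d_{2k-1})`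
and `(d_{2k}-1)/(d₁⋯d_{2k}) + 1/(d₁⋯d_{2k}) = 1/(d₁⋯d_{2k-1})`, so the difference series
telescopes to `0`.
-/

open Finset Filter Topology

theorem tsum_sub_succ_eq_of_tendsto {G : Type*} [AddCommGroup G] [TopologicalSpace G]
    [IsTopologicalAddGroup G] [T2Space G] {v : ℕ → G} {l : G}
    (hs : Summable fun n => v n - v (n + 1)) (hv : Tendsto v atTop (𝓝 l)) :
    ∑' n, (v n - v (n + 1)) = v 0 - l := by
  refine tendsto_nhds_unique hs.hasSum.tendsto_sum_nat ?_
  simpa only [sum_range_sub'] using tendsto_const_nhds.sub hv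

namespace AlternatingCantor

variable {d : ℕ → ℕ}

noncomputable def denom (d : ℕ → ℕ) (n : ℕ) : ℝ := ∏ j ∈ Icc 1 n, (d j : ℝ)

/-- Indexed from `0`: `digitTerm d ε n` is the paper's term of index `n + 1`. -/
noncomputable def digitTerm (d ε : ℕ → ℕ) (n : ℕ) : ℝ :=
  (-1) ^ (n + 1) * (ε (n + 1) : ℝ) / denom d (n + 1)

def maxDigits (d : ℕ → ℕ) (n : ℕ) : ℕ := if Odd n then 0 else d n - 1

noncomputable def oddInvDenom (d : ℕ → ℕ) (n : ℕ) : ℝ := if Odd n then (denom d n)⁻¹ else 0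

theorem denom_succ (d : ℕ → ℕ) (n : ℕ) : denom d (n + 1) = denom d n * d (n + 1) :=
  prod_Icc_succ_top (Nat.le_add_left 1 n) _

section

variable (hd : ∀ n, 1 ≤ n → 2 ≤ d n)
include hd

theorem maxDigits_lt {n : ℕ} (hn : 1 ≤ n) : maxDigits d n < d n := by
  have := hd n hn
  unfold maxDigits
  split <;> omega

theorem two_pow_le_denom (n : ℕ) : (2 : ℝ) ^ n ≤ denom d n := by
  induction n with
  | zero => simp [denom]
  | succ k ih =>
    rw [denom_succ, pow_succ]
    have h2 : (2 : ℝ) ≤ d (k + 1) := by exact_mod_cast hd (k + 1) (by omega)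
    exact mul_le_mul ih h2 zero_le_two ((pow_pos two_pos k).le.trans ih)

theorem denom_pos (n : ℕ) : 0 < denom d n :=
  (pow_pos two_pos n).trans_le (two_pow_le_denom hd n)

theorem summable_of_abs_le_inv_denom {f : ℕ → ℝ} (hf : ∀ n, |f n| ≤ (denom d n)⁻¹) :
    Summable f := by
  refine Summable.of_norm_bounded summable_geometric_two fun n => (hf n).trans ?_
  rw [one_div, inv_pow]
  exact inv_anti₀ (pow_pos two_pos n) (two_pow_le_denom hd n)

theorem summable_digitTerm {ε : ℕ → ℕ} (hε : ∀ n, 1 ≤ n → ε n < d n) :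
    Summable (digitTerm d ε) := by
  refine summable_of_abs_le_inv_denom hd fun n => ?_
  have hpos := denom_pos hd n
  have hε' : (ε (n + 1) : ℝ) ≤ d (n + 1) := by exact_mod_cast (hε (n + 1) (by omega)).le
  have hd' : (0 : ℝ) < d (n + 1) := Nat.cast_pos.mpr (by have := hd (n + 1) (by omega); omega)
  calc |digitTerm d ε n| = (ε (n + 1) : ℝ) / (denom d n * d (n + 1)) := by
        rw [digitTerm, denom_succ, abs_div, abs_mul, abs_pow, abs_neg, abs_one, one_pow, one_mul,
          Nat.abs_cast, abs_of_pos (by positivity)]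
    _ ≤ d (n + 1) / (denom d n * d (n + 1)) := by gcongr
    _ = (denom d n)⁻¹ := by field_simp

theorem summable_alternating_inv_denom :
    Summable fun n : ℕ => (-1 : ℝ) ^ (n + 2) / denom d (n + 1) := by
  refine (summable_nat_add_iff (f := fun n => (-1 : ℝ) ^ (n + 1) / denom d n) 1).mpr
    (summable_of_abs_le_inv_denom hd fun n => ?_)
  rw [abs_div, abs_pow, abs_neg, abs_one, one_pow, abs_of_pos (denom_pos hd n), one_div]

theorem digitTerm_le_maxDigits {ε : ℕ → ℕ} (hε : ∀ n, 1 ≤ n → ε n < d n) (n : ℕ) :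
    digitTerm d ε n ≤ digitTerm d (maxDigits d) n := by
  have hpos := denom_pos hd (n + 1)
  unfold digitTerm maxDigits
  rcases Nat.even_or_odd n with hn | hn
  · rw [if_pos hn.add_one, hn.add_one.neg_one_pow, Nat.cast_zero, mul_zero, zero_div, neg_one_mul,
      neg_div, neg_nonpos]
    positivity
  · have hε' : (ε (n + 1) : ℝ) ≤ (d (n + 1) - 1 : ℕ) := by
      exact_mod_cast Nat.le_sub_one_of_lt (hε (n + 1) (by omega))
    rw [if_neg (Nat.not_odd_iff_even.mpr hn.add_one), hn.add_one.neg_one_pow, one_mul, one_mul]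
    gcongr

theorem digitTerm_maxDigits_sub (n : ℕ) :
    digitTerm d (maxDigits d) n - (-1) ^ (n + 2) / denom d (n + 1) =
      oddInvDenom d n - oddInvDenom d (n + 1) := by
  have hpos := denom_pos hd n
  have hd' : 1 ≤ d (n + 1) := by have := hd (n + 1); omega
  unfold digitTerm maxDigits oddInvDenom
  rcases Nat.even_or_odd n with hn | hn
  · have hn2 : Even (n + 2) := hn.add even_two
    simp [Nat.not_odd_iff_even.mpr hn, hn.add_one, hn2.neg_one_pow]
  · have hn2 : Odd (n + 2) := hn.add_even even_two
    rw [if_neg (Nat.not_odd_iff_even.mpr hn.add_one), if_pos hn,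
      if_neg (Nat.not_odd_iff_even.mpr hn.add_one), hn.add_one.neg_one_pow, hn2.neg_one_pow,
      Nat.cast_sub hd', denom_succ]
    field_simp
    ring

theorem tsum_digitTerm_maxDigits :
    ∑' n, digitTerm d (maxDigits d) n = ∑' n : ℕ, (-1 : ℝ) ^ (n + 2) / denom d (n + 1) := by
  have hv : Summable (oddInvDenom d) := summable_of_abs_le_inv_denom hd fun n => by
    unfold oddInvDenom
    split
    · rw [abs_of_pos (inv_pos.mpr (denom_pos hd n))]
    · simpa using (denom_pos hd n).le
  have hdiff : Summable fun n => oddInvDenom d n - oddInvDenom d (n + 1) :=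
    hv.sub ((summable_nat_add_iff 1).mpr hv)
  have htelescope :
      ∑' n, (digitTerm d (maxDigits d) n - (-1 : ℝ) ^ (n + 2) / denom d (n + 1)) = 0 := by
    simp_rw [digitTerm_maxDigits_sub hd]
    rw [tsum_sub_succ_eq_of_tendsto hdiff hv.tendsto_atTop_zero]
    simp [oddInvDenom]
  rw [(summable_digitTerm hd fun _ => maxDigits_lt hd).tsum_sub
    (summable_alternating_inv_denom hd)] at htelescope
  exact sub_eq_zero.mp htelescope

end

end AlternatingCantor

open AlternatingCantor

/-- The maximum value of ∑ (-1)^n ε_n/(d₁⋯d_n) over all digit sequences equals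
a₀ = ∑ (-1)^{n+1}/(d₁⋯d_n), attained by ε_{2k−1} = 0, ε_{2k} = d_{2k}−1. -/
theorem alternating_cantor_isGreatest (d : ℕ → ℕ) (hd : ∀ n, 1 ≤ n → 2 ≤ d n) :
    IsGreatest
      {x : ℝ | ∃ ε : ℕ → ℕ, (∀ n, 1 ≤ n → ε n < d n) ∧
        x = ∑' n : ℕ, (-1 : ℝ) ^ (n + 1) * (ε (n + 1) : ℝ) /
              ∏ j ∈ Finset.Icc 1 (n + 1), (d j : ℝ)}
      (∑' n : ℕ, (-1 : ℝ) ^ (n + 2) / ∏ j ∈ Finset.Icc 1 (n + 1), (d j : ℝ)) ∧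
    (∑' n : ℕ, (-1 : ℝ) ^ (n + 1) *
        (((if Odd (n + 1) then 0 else d (n + 1) - 1) : ℕ) : ℝ) /
        ∏ j ∈ Finset.Icc 1 (n + 1), (d j : ℝ)) =
      ∑' n : ℕ, (-1 : ℝ) ^ (n + 2) / ∏ j ∈ Finset.Icc 1 (n + 1), (d j : ℝ) := by
  have hmax : ∀ n, 1 ≤ n → maxDigits d n < d n := fun _ => maxDigits_lt hd
  have hval := tsum_digitTerm_maxDigits hd
  refine ⟨⟨⟨maxDigits d, hmax, hval.symm⟩, ?_⟩, hval⟩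
  rintro x ⟨ε, hε, rfl⟩
  exact (Summable.tsum_le_tsum (digitTerm_le_maxDigits hd hε) (summable_digitTerm hd hε)
    (summable_digitTerm hd hmax)).trans hval.le
end

section
/- The minimum value of ∑_{n=1}^∞ (-1)^n ε_n/(d₁⋯d_n) over all digit sequences (ε_n) with ε_n ∈ {0,…,d_n−1} equals a₀ − 1, attained by ε_{2k−1} = d_{2k−1}−1 and ε_{2k} = 0 for all k. -/
/-!
Write `P n = d₁ ⋯ dₙ ≥ 2ⁿ`. Digit by digit, the sign `(-1)ⁿ` decides which admissible digit
minimises the `n`-th term: the largest one `dₙ - 1` for odd `n`, and `0` for even `n`; since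
all the series converge absolutely, this digit sequence minimises the sum. Subtracting the
series `a₀` from it leaves the terms `-1 / P (2k)` and `1 / P (2k + 2)`, which telescope to
`-1 / P 0 = -1`.
-/

open Finset Filter Topology

namespace CantorSeries

variable {d : ℕ → ℕ}

noncomputable def digitProd (d : ℕ → ℕ) (n : ℕ) : ℝ := ∏ j ∈ Icc 1 n, (d j : ℝ)

lemma digitProd_succ (n : ℕ) : digitProd d (n + 1) = digitProd d n * d (n + 1) :=
  prod_Icc_succ_top (Nat.le_add_left 1 n) _

lemma two_pow_le_digitProd (hd : ∀ n, 1 ≤ n → 2 ≤ d n) (n : ℕ) :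
    (2 : ℝ) ^ n ≤ digitProd d n := by
  calc (2 : ℝ) ^ n = ∏ _j ∈ Icc 1 n, (2 : ℝ) := by simp
    _ ≤ digitProd d n :=
      prod_le_prod (fun _ _ => zero_le_two) fun j hj => by exact_mod_cast hd j (mem_Icc.1 hj).1

lemma digitProd_pos (hd : ∀ n, 1 ≤ n → 2 ≤ d n) (n : ℕ) : 0 < digitProd d n :=
  (pow_pos two_pos n).trans_le (two_pow_le_digitProd hd n)

lemma inv_digitProd_le (hd : ∀ n, 1 ≤ n → 2 ≤ d n) (n : ℕ) :
    (digitProd d n)⁻¹ ≤ (1 / 2) ^ n := by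
  rw [one_div, inv_pow]
  exact inv_anti₀ (by positivity) (two_pow_le_digitProd hd n)

lemma summable_div_digitProd_succ (hd : ∀ n, 1 ≤ n → 2 ≤ d n) {c : ℕ → ℝ}
    (hc : ∀ n, |c n| ≤ d (n + 1)) : Summable fun n => c n / digitProd d (n + 1) := by
  refine summable_geometric_two.of_norm_bounded fun n => ?_
  have hPn := digitProd_pos hd n
  have hdn : (0 : ℝ) < d (n + 1) := by
    exact_mod_cast (hd (n + 1) (Nat.le_add_left 1 n)).trans_lt' two_pos
  calc ‖c n / digitProd d (n + 1)‖ = |c n| / (digitProd d n * d (n + 1)) := by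
        rw [Real.norm_eq_abs, abs_div, abs_of_pos (digitProd_pos hd _), digitProd_succ]
    _ ≤ d (n + 1) / (digitProd d n * d (n + 1)) := by gcongr; exact hc n
    _ = (digitProd d n)⁻¹ := by field_simp
    _ ≤ (1 / 2) ^ n := inv_digitProd_le hd n

lemma summable_digitSeries (hd : ∀ n, 1 ≤ n → 2 ≤ d n) {ε : ℕ → ℕ}
    (hε : ∀ n, 1 ≤ n → ε n < d n) :
    Summable fun n => (-1 : ℝ) ^ (n + 1) * ε (n + 1) / digitProd d (n + 1) :=
  summable_div_digitProd_succ hd fun n => by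
    simpa using (Nat.cast_le (α := ℝ)).2 (hε (n + 1) (Nat.le_add_left 1 n)).le

lemma summable_alternating_inv_digitProd (hd : ∀ n, 1 ≤ n → 2 ≤ d n) :
    Summable fun n => (-1 : ℝ) ^ (n + 2) / digitProd d (n + 1) :=
  summable_div_digitProd_succ hd fun n => by
    simpa using (Nat.cast_le (α := ℝ)).2 ((hd (n + 1) (Nat.le_add_left 1 n)).trans' one_le_two)

def minDigit (d : ℕ → ℕ) (k : ℕ) : ℕ := if Odd k then d k - 1 else 0

lemma minDigit_lt {k : ℕ} (hk : 0 < d k) : minDigit d k < d k := by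
  unfold minDigit
  split <;> omega

lemma neg_one_pow_mul_minDigit_le {k e : ℕ} (he : e < d k) :
    (-1 : ℝ) ^ k * minDigit d k ≤ (-1) ^ k * e := by
  rcases k.even_or_odd with hk | hk
  · simp [minDigit, hk.neg_one_pow, Nat.not_odd_iff_even.2 hk]
  · have : (e : ℝ) ≤ (d k - 1 : ℕ) := by exact_mod_cast Nat.le_sub_one_of_lt he
    simpa [minDigit, hk.neg_one_pow, hk] using this

lemma hasSum_minDigit_sub_alternating (hd : ∀ n, 1 ≤ n → 2 ≤ d n) :
    HasSum (fun n => (-1 : ℝ) ^ (n + 1) * minDigit d (n + 1) / digitProd d (n + 1)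
      - (-1) ^ (n + 2) / digitProd d (n + 1)) (-1) := by
  set w : ℕ → ℝ := fun n => if Even n then (digitProd d n)⁻¹ else 0
  have hstep : ∀ n, (-1 : ℝ) ^ (n + 1) * minDigit d (n + 1) / digitProd d (n + 1)
      - (-1) ^ (n + 2) / digitProd d (n + 1) = w (n + 1) - w n := by
    intro n
    have hd1 : 1 ≤ d (n + 1) := (hd (n + 1) (Nat.le_add_left 1 n)).trans' one_le_two
    rw [show (-1 : ℝ) ^ (n + 2) = (-1) ^ n by rw [pow_add]; norm_num, pow_succ]
    rcases n.even_or_odd with hn | hn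
    · have hn1 : Odd (n + 1) := hn.add_one
      simp [w, minDigit, hn, hn1, Nat.not_even_iff_odd.2 hn1, hn.neg_one_pow, digitProd_succ,
        Nat.cast_sub hd1]
      field_simp
      ring
    · have hn1 : Even (n + 1) := hn.add_one
      simp [w, minDigit, hn1, Nat.not_even_iff_odd.2 hn, Nat.not_odd_iff_even.2 hn1,
        hn.neg_one_pow]
      ring
  have hw : Tendsto w atTop (𝓝 0) := by
    refine squeeze_zero (fun n => ?_) (fun n => ?_)
      (tendsto_pow_atTop_nhds_zero_of_lt_one (r := (1 / 2 : ℝ)) (by norm_num) (by norm_num))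
    · have := digitProd_pos hd n
      simp only [w]; split <;> positivity
    · simp only [w]; split
      · exact inv_digitProd_le hd n
      · positivity
  have hsum := (summable_digitSeries hd fun k hk => minDigit_lt ((hd k hk).trans_lt' two_pos)).sub
    (summable_alternating_inv_digitProd hd)
  simp only [hstep] at hsum ⊢
  rw [hsum.hasSum_iff_tendsto_nat]
  simp only [sum_range_sub]
  simpa [w, digitProd] using hw.sub_const (w 0)

end CantorSeries

open CantorSeries in
/-- The minimum value of ∑ (-1)^n ε_n/(d₁⋯d_n) over all digit sequences equals
a₀ − 1, attained by ε_{2k−1} = d_{2k−1}−1, ε_{2k} = 0. -/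
theorem alternating_cantor_isLeast (d : ℕ → ℕ) (hd : ∀ n, 1 ≤ n → 2 ≤ d n) :
    IsLeast
      {x : ℝ | ∃ ε : ℕ → ℕ, (∀ n, 1 ≤ n → ε n < d n) ∧
        x = ∑' n : ℕ, (-1 : ℝ) ^ (n + 1) * (ε (n + 1) : ℝ) /
              ∏ j ∈ Finset.Icc 1 (n + 1), (d j : ℝ)}
      ((∑' n : ℕ, (-1 : ℝ) ^ (n + 2) / ∏ j ∈ Finset.Icc 1 (n + 1), (d j : ℝ)) - 1) ∧
    (∑' n : ℕ, (-1 : ℝ) ^ (n + 1) *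
        (((if Odd (n + 1) then d (n + 1) - 1 else 0) : ℕ) : ℝ) /
        ∏ j ∈ Finset.Icc 1 (n + 1), (d j : ℝ)) =
      (∑' n : ℕ, (-1 : ℝ) ^ (n + 2) / ∏ j ∈ Finset.Icc 1 (n + 1), (d j : ℝ)) - 1 := by
  have hmin_lt : ∀ n, 1 ≤ n → minDigit d n < d n := fun n hn =>
    minDigit_lt ((hd n hn).trans_lt' two_pos)
  have hmin : ∑' n, (-1 : ℝ) ^ (n + 1) * minDigit d (n + 1) / digitProd d (n + 1) =
      ∑' n, (-1 : ℝ) ^ (n + 2) / digitProd d (n + 1) - 1 := by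
    linarith [(hasSum_minDigit_sub_alternating hd).tsum_eq,
      (summable_digitSeries hd hmin_lt).tsum_sub (summable_alternating_inv_digitProd hd)]
  refine ⟨⟨⟨minDigit d, hmin_lt, hmin.symm⟩, ?_⟩, hmin⟩
  rintro x ⟨ε, hε, rfl⟩
  refine hmin.symm.trans_le <|
    (summable_digitSeries hd hmin_lt).tsum_le_tsum (fun n => ?_) (summable_digitSeries hd hε)
  exact div_le_div_of_nonneg_right (neg_one_pow_mul_minDigit_le (hε _ (Nat.le_add_left 1 n)))
    (digitProd_pos hd _).le
end

section
/- Every real number x ∈ [a₀−1, a₀] admits a representation as an alternating Cantor series x = ∑_{n=1}^∞ (-1)^n ε_n/(d₁⋯d_n) with digits ε_n ∈ {0,…,d_n−1}. -/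
/-!
Put `y = x + 1 - a₀ ∈ [0, 1]` and expand `y` greedily as an ordinary Cantor series
`y = ∑ cₙ / (d₁⋯dₙ)` with digits `0 ≤ cₙ < dₙ`. Reflecting the digits in odd positions,
`εₙ = dₙ - 1 - cₙ` for odd `n` and `εₙ = cₙ` for even `n`, turns it into an alternating series
with value `y - ∑_{n odd} (dₙ - 1) / (d₁⋯dₙ)`. Since
`(dₙ - 1) / (d₁⋯dₙ) = 1 / (d₁⋯dₙ₋₁) - 1 / (d₁⋯dₙ)`, the subtracted sum regroups to
`1 - 1/d₁ + 1/(d₁d₂) - ⋯ = 1 - a₀`, and the alternating series sums to `x`.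
-/

open Filter Topology Finset

theorem hasSum_ite_even_add_succ {E : Type*} [NormedAddCommGroup E] [CompleteSpace E]
    {f : ℕ → E} (hf : Summable f) :
    HasSum (fun n => if Even n then f n + f (n + 1) else 0) (∑' n, f n) := by
  have he : Summable fun k => f (2 * k) :=
    hf.comp_injective (mul_right_injective₀ (two_ne_zero' ℕ))
  have ho : Summable fun k => f (2 * k + 1) :=
    hf.comp_injective ((add_left_injective 1).comp (mul_right_injective₀ (two_ne_zero' ℕ)))
  have hpairs : HasSum (fun k => f (2 * k) + f (2 * k + 1)) (∑' n, f n) := by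
    rw [← tsum_even_add_odd he ho]
    exact he.hasSum.add ho.hasSum
  have := HasSum.even_add_odd (f := fun n => if Even n then f n + f (n + 1) else 0)
    (m := ∑' n, f n) (m' := 0) (by simpa using hpairs) (by simp [Nat.not_even_bit1])
  rwa [add_zero] at this

theorem sub_natCeil_sub_one_mem_Icc {t : ℝ} (ht : 0 ≤ t) :
    t - ((⌈t⌉₊ - 1 : ℕ) : ℝ) ∈ Set.Icc 0 1 := by
  rcases ht.eq_or_lt with rfl | ht
  · simp
  rw [Nat.cast_sub (Nat.one_le_iff_ne_zero.2 (Nat.ceil_pos.2 ht).ne'), Nat.cast_one]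
  constructor
  · linarith [Nat.ceil_lt_add_one ht.le]
  · linarith [Nat.le_ceil t]

theorem natCeil_sub_one_lt {t : ℝ} {k : ℕ} (hk : 0 < k) (ht : t ≤ k) : ⌈t⌉₊ - 1 < k := by
  have := Nat.ceil_le.2 ht
  omega

namespace CantorSeries

variable (d : ℕ → ℕ)

noncomputable def denom (n : ℕ) : ℝ := ∏ j ∈ Icc 1 n, (d j : ℝ)

@[simp]
theorem denom_zero : denom d 0 = 1 := by simp [denom]

theorem denom_succ (n : ℕ) : denom d (n + 1) = denom d n * d (n + 1) := by
  rw [denom, denom, prod_Icc_succ_top (Nat.le_add_left 1 n)]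

variable {d}

theorem two_pow_le_denom (hd : ∀ n, 1 ≤ n → 2 ≤ d n) (n : ℕ) : (2 : ℝ) ^ n ≤ denom d n := by
  induction n with
  | zero => simp
  | succ n ih =>
    have h2 : (2 : ℝ) ≤ d (n + 1) := by exact_mod_cast hd (n + 1) n.succ_pos
    rw [denom_succ, pow_succ]
    exact mul_le_mul ih h2 zero_le_two ((pow_nonneg zero_le_two n).trans ih)

theorem denom_pos (hd : ∀ n, 1 ≤ n → 2 ≤ d n) (n : ℕ) : 0 < denom d n :=
  (pow_pos two_pos n).trans_le (two_pow_le_denom hd n)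

theorem inv_denom_le (hd : ∀ n, 1 ≤ n → 2 ≤ d n) (n : ℕ) : (denom d n)⁻¹ ≤ (1 / 2) ^ n := by
  rw [one_div, inv_pow]
  exact inv_anti₀ (pow_pos two_pos n) (two_pow_le_denom hd n)

theorem tendsto_inv_denom (hd : ∀ n, 1 ≤ n → 2 ≤ d n) :
    Tendsto (fun n => (denom d n)⁻¹) atTop (𝓝 0) :=
  squeeze_zero (fun n => inv_nonneg.2 (denom_pos hd n).le) (inv_denom_le hd)
    (tendsto_pow_atTop_nhds_zero_of_lt_one (by norm_num) (by norm_num))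

theorem summable_neg_one_pow_div_denom (hd : ∀ n, 1 ≤ n → 2 ≤ d n) :
    Summable fun n => (-1 : ℝ) ^ n / denom d n := by
  refine Summable.of_norm_bounded summable_geometric_two fun n => ?_
  rw [norm_div, norm_pow, norm_neg, norm_one, one_pow, one_div,
    Real.norm_of_nonneg (denom_pos hd n).le]
  exact inv_denom_le hd n

section Greedy

variable (d)

/- Taking the digit `⌈t⌉₊ - 1` of `t = rₙ dₙ₊₁` instead of `⌊t⌋₊` keeps the remainders `rₙ` in
`[0, 1]` instead of `[0, 1)`, so that `y = 1` needs no special case. -/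
noncomputable def greedyRem (y : ℝ) : ℕ → ℝ
  | 0 => y
  | n + 1 => greedyRem y n * d (n + 1) - (⌈greedyRem y n * d (n + 1)⌉₊ - 1 : ℕ)

noncomputable def greedyDigit (y : ℝ) (n : ℕ) : ℕ := ⌈greedyRem d y n * d (n + 1)⌉₊ - 1

theorem greedyRem_succ (y : ℝ) (n : ℕ) :
    greedyRem d y (n + 1) = greedyRem d y n * d (n + 1) - greedyDigit d y n :=
  rfl

variable {d} {y : ℝ}

theorem greedyRem_nonneg (hy : 0 ≤ y) : ∀ n, 0 ≤ greedyRem d y n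
  | 0 => hy
  | n + 1 =>
    (sub_natCeil_sub_one_mem_Icc (mul_nonneg (greedyRem_nonneg hy n) (Nat.cast_nonneg _))).1

theorem greedyRem_le_one (hy : y ∈ Set.Icc 0 1) : ∀ n, greedyRem d y n ≤ 1
  | 0 => hy.2
  | n + 1 =>
    (sub_natCeil_sub_one_mem_Icc (mul_nonneg (greedyRem_nonneg hy.1 n) (Nat.cast_nonneg _))).2

theorem greedyDigit_lt (hy : y ∈ Set.Icc 0 1) {n : ℕ} (hd : 0 < d (n + 1)) :
    greedyDigit d y n < d (n + 1) :=
  natCeil_sub_one_lt hd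
    (mul_le_of_le_one_left (Nat.cast_nonneg _) (greedyRem_le_one hy n))

theorem sum_greedyDigit_add_greedyRem (hd : ∀ n, 1 ≤ n → 2 ≤ d n) (y : ℝ) (N : ℕ) :
    ∑ n ∈ range N, (greedyDigit d y n : ℝ) / denom d (n + 1) + greedyRem d y N / denom d N
      = y := by
  induction N with
  | zero => simp [greedyRem]
  | succ N ih =>
    have hD := (denom_pos hd N).ne'
    have hd0 : (d (N + 1) : ℝ) ≠ 0 := by
      have := hd (N + 1) N.succ_pos
      positivity
    rw [sum_range_succ, add_assoc, greedyRem_succ, denom_succ]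
    convert ih using 2
    field_simp
    ring

theorem hasSum_greedyDigit_div_denom (hd : ∀ n, 1 ≤ n → 2 ≤ d n) (hy : y ∈ Set.Icc 0 1) :
    HasSum (fun n => (greedyDigit d y n : ℝ) / denom d (n + 1)) y := by
  have hterm n : 0 ≤ (greedyDigit d y n : ℝ) / denom d (n + 1) :=
    div_nonneg (Nat.cast_nonneg _) (denom_pos hd (n + 1)).le
  refine (hasSum_iff_tendsto_nat_of_nonneg hterm y).2 ?_
  have hrem : Tendsto (fun N => greedyRem d y N / denom d N) atTop (𝓝 0) :=
    squeeze_zero (fun N => div_nonneg (greedyRem_nonneg hy.1 N) (denom_pos hd N).le)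
      (fun N => by
        rw [div_eq_mul_inv]
        exact mul_le_of_le_one_left (inv_nonneg.2 (denom_pos hd N).le) (greedyRem_le_one hy N))
      (tendsto_inv_denom hd)
  simpa using (tendsto_const_nhds.sub hrem).congr fun N =>
    (eq_sub_of_add_eq (sum_greedyDigit_add_greedyRem hd y N)).symm

theorem exists_digits_hasSum (hd : ∀ n, 1 ≤ n → 2 ≤ d n) (hy : y ∈ Set.Icc 0 1) :
    ∃ c : ℕ → ℕ, (∀ n, 1 ≤ n → c n < d n) ∧
      HasSum (fun n => (c (n + 1) : ℝ) / denom d (n + 1)) y :=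
  ⟨fun m => greedyDigit d y (m - 1),
    fun m hm => by
      simpa [Nat.sub_add_cancel hm] using greedyDigit_lt (n := m - 1) hy (by grind),
    by simpa using hasSum_greedyDigit_div_denom hd hy⟩

end Greedy

theorem hasSum_ite_even_sub_one_div_denom (hd : ∀ n, 1 ≤ n → 2 ≤ d n) :
    HasSum (fun n => if Even n then ((d (n + 1) : ℝ) - 1) / denom d (n + 1) else 0)
      (1 - ∑' n, (-1 : ℝ) ^ (n + 2) / denom d (n + 1)) := by
  have hsum := summable_neg_one_pow_div_denom hd
  have hval : ∑' n, (-1 : ℝ) ^ n / denom d n = 1 - ∑' n, (-1 : ℝ) ^ (n + 2) / denom d (n + 1) := by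
    rw [hsum.tsum_eq_zero_add, sub_eq_add_neg, ← tsum_neg]
    simp [pow_succ, neg_div]
  rw [← hval]
  refine (hasSum_ite_even_add_succ hsum).congr_fun fun n => ?_
  split_ifs with hn
  · have hD := (denom_pos hd n).ne'
    have hd0 : (d (n + 1) : ℝ) ≠ 0 := by
      have := hd (n + 1) n.succ_pos
      positivity
    rw [denom_succ, pow_succ, hn.neg_one_pow]
    field_simp
    ring
  · rfl

variable (d) in
def reflectOddDigits (c : ℕ → ℕ) (m : ℕ) : ℕ := if Even m then c m else d m - 1 - c m

theorem reflectOddDigits_lt {c : ℕ → ℕ} (hc : ∀ n, 1 ≤ n → c n < d n) {n : ℕ} (hn : 1 ≤ n) :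
    reflectOddDigits d c n < d n := by
  have := hc n hn
  unfold reflectOddDigits
  split_ifs <;> omega

theorem hasSum_reflectOddDigits (hd : ∀ n, 1 ≤ n → 2 ≤ d n) {c : ℕ → ℕ}
    (hc : ∀ n, 1 ≤ n → c n < d n) {y : ℝ}
    (hy : HasSum (fun n => (c (n + 1) : ℝ) / denom d (n + 1)) y) :
    HasSum (fun n => (-1 : ℝ) ^ (n + 1) * (reflectOddDigits d c (n + 1) : ℝ) / denom d (n + 1))
      (y - (1 - ∑' n, (-1 : ℝ) ^ (n + 2) / denom d (n + 1))) := by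
  refine (hy.sub (hasSum_ite_even_sub_one_div_denom hd)).congr_fun fun n => ?_
  have hcn := hc (n + 1) n.succ_pos
  rcases Nat.even_or_odd n with hn | hn
  · have hn' : ¬Even (n + 1) := by simpa [Nat.even_add_one] using hn
    rw [reflectOddDigits, if_neg hn', if_pos hn, pow_succ, hn.neg_one_pow,
      Nat.cast_sub (by omega), Nat.cast_sub (by omega)]
    ring
  · have hn' : Even (n + 1) := hn.add_one
    rw [reflectOddDigits, if_pos hn', if_neg (Nat.not_even_iff_odd.2 hn), hn'.neg_one_pow]
    ring

end CantorSeries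

open CantorSeries in
/-- Every x ∈ [a₀−1, a₀] admits a representation as an alternating Cantor
series x = ∑_{n=1}^∞ (-1)^n ε_n/(d₁⋯d_n) with digits ε_n ∈ {0,…,d_n−1}. -/
theorem alternating_cantor_representation (d : ℕ → ℕ) (hd : ∀ n, 1 ≤ n → 2 ≤ d n) (x : ℝ)
    (hx : x ∈ Set.Icc
      ((∑' n : ℕ, (-1 : ℝ) ^ (n + 2) / ∏ j ∈ Finset.Icc 1 (n + 1), (d j : ℝ)) - 1)
      (∑' n : ℕ, (-1 : ℝ) ^ (n + 2) / ∏ j ∈ Finset.Icc 1 (n + 1), (d j : ℝ))) :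
    ∃ ε : ℕ → ℕ, (∀ n, 1 ≤ n → ε n < d n) ∧
      x = ∑' n : ℕ, (-1 : ℝ) ^ (n + 1) * (ε (n + 1) : ℝ) /
            ∏ j ∈ Finset.Icc 1 (n + 1), (d j : ℝ) := by
  set a₀ := ∑' n : ℕ, (-1 : ℝ) ^ (n + 2) / ∏ j ∈ Finset.Icc 1 (n + 1), (d j : ℝ)
  obtain ⟨hx₁, hx₂⟩ := hx
  obtain ⟨c, hc, hsum⟩ := exists_digits_hasSum hd (y := x + 1 - a₀) ⟨by linarith, by linarith⟩
  refine ⟨reflectOddDigits d c, fun n hn => reflectOddDigits_lt hc hn, ?_⟩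
  have hval := (hasSum_reflectOddDigits hd hc hsum).tsum_eq
  unfold denom at hval
  rw [hval]
  ring
end

section
/- Every real number x ∈ [0,1] admits a representation x = ∑_{n=1}^∞ (-1)^{n+1}(1+ε_n)/(d₁⋯d_n) with digits ε_n ∈ {0,…,d_n−1}. -/
/-!
Expand `x` greedily. With remainder `r₀ = x`, the `n`-th digit is the largest admissible
`ε ≤ d_n r_{n-1}` and the next remainder is `r_n = 1 + ε_n - d_n r_{n-1}`; this map sends
`[0,1]` into itself. By induction `x - S_N = (-1)^N r_N / (d₁⋯d_N)` for the partial sums `S_N`,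
and since `d₁⋯d_N ≥ 2^N` the error tends to zero, while the terms are dominated by `2^{-n}`.
-/

open Finset Filter Topology

namespace NegaCantor

noncomputable def digit (D : ℕ) (y : ℝ) : ℕ := min ⌊(D : ℝ) * y⌋₊ (D - 1)

noncomputable def shift (D : ℕ) (y : ℝ) : ℝ := 1 + digit D y - D * y

section Digit

variable {D : ℕ} {y : ℝ}

theorem digit_lt (hD : 0 < D) : digit D y < D :=
  (min_le_right _ _).trans_lt (Nat.sub_lt hD one_pos)

theorem digit_le_mul (hy : 0 ≤ y) : (digit D y : ℝ) ≤ D * y :=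
  (Nat.cast_le.mpr (min_le_left _ _)).trans (Nat.floor_le (by positivity))

theorem mul_sub_one_le_digit (hy : y ≤ 1) : (D : ℝ) * y - 1 ≤ digit D y := by
  rcases le_total ⌊(D : ℝ) * y⌋₊ (D - 1) with h | h
  · rw [digit, min_eq_left h]
    linarith [Nat.lt_floor_add_one ((D : ℝ) * y)]
  · rw [digit, min_eq_right h]
    have hcast : (D : ℝ) ≤ ((D - 1 : ℕ) : ℝ) + 1 := by exact_mod_cast (by omega : D ≤ D - 1 + 1)
    nlinarith [(Nat.cast_nonneg D : (0 : ℝ) ≤ D)]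

theorem shift_mem_Icc (hy : y ∈ Set.Icc (0 : ℝ) 1) : shift D y ∈ Set.Icc (0 : ℝ) 1 := by
  have h₁ := digit_le_mul (D := D) hy.1
  have h₂ := mul_sub_one_le_digit (D := D) hy.2
  constructor <;> unfold shift <;> linarith

end Digit

noncomputable def remainder (d : ℕ → ℕ) (x : ℝ) : ℕ → ℝ
  | 0 => x
  | n + 1 => shift (d (n + 1)) (remainder d x n)

noncomputable def digits (d : ℕ → ℕ) (x : ℝ) : ℕ → ℕ
  | 0 => 0
  | n + 1 => digit (d (n + 1)) (remainder d x n)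

noncomputable def denom (d : ℕ → ℕ) (n : ℕ) : ℝ := ∏ j ∈ Icc 1 n, (d j : ℝ)

noncomputable def term (d ε : ℕ → ℕ) (n : ℕ) : ℝ :=
  (-1 : ℝ) ^ (n + 2) * (1 + (ε (n + 1) : ℝ)) / denom d (n + 1)

section Expansion

variable {d : ℕ → ℕ} {x : ℝ}

theorem remainder_mem_Icc (hx : x ∈ Set.Icc (0 : ℝ) 1) (n : ℕ) :
    remainder d x n ∈ Set.Icc (0 : ℝ) 1 := by
  induction n with
  | zero => exact hx
  | succ n ih => exact shift_mem_Icc ih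

theorem remainder_succ (n : ℕ) :
    remainder d x (n + 1) = 1 + digits d x (n + 1) - d (n + 1) * remainder d x n := rfl

theorem digits_lt {n : ℕ} (hd : 0 < d n) : digits d x n < d n := by
  cases n with
  | zero => exact hd
  | succ n => exact digit_lt hd

theorem denom_succ (n : ℕ) : denom d (n + 1) = denom d n * d (n + 1) :=
  prod_Icc_succ_top (Nat.le_add_left 1 n) _

theorem denom_pos (hd : ∀ n, 1 ≤ n → 0 < d n) (n : ℕ) : 0 < denom d n :=
  prod_pos fun j hj => Nat.cast_pos.mpr (hd j (mem_Icc.mp hj).1)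

theorem two_pow_le_denom (hd : ∀ n, 1 ≤ n → 2 ≤ d n) (n : ℕ) : (2 : ℝ) ^ n ≤ denom d n := by
  calc (2 : ℝ) ^ n = ∏ _j ∈ Icc 1 n, (2 : ℝ) := by simp
    _ ≤ denom d n :=
      prod_le_prod (fun _ _ => zero_le_two) fun j hj => by exact_mod_cast hd j (mem_Icc.mp hj).1

theorem inv_denom_le (hd : ∀ n, 1 ≤ n → 2 ≤ d n) (n : ℕ) : (denom d n)⁻¹ ≤ 2⁻¹ ^ n := by
  rw [inv_pow]
  exact inv_anti₀ (by positivity) (two_pow_le_denom hd n)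

theorem sub_sum_term_eq (hd : ∀ n, 1 ≤ n → 0 < d n) (N : ℕ) :
    x - ∑ k ∈ range N, term d (digits d x) k = (-1) ^ N * remainder d x N / denom d N := by
  induction N with
  | zero => simp [remainder, denom]
  | succ N ih =>
    have hP := (denom_pos hd N).ne'
    have hD : (d (N + 1) : ℝ) ≠ 0 := Nat.cast_ne_zero.mpr (hd (N + 1) N.succ_pos).ne'
    rw [sum_range_succ, ← sub_sub, ih, term, remainder_succ, denom_succ]
    field_simp
    ring

theorem norm_term_le (hd : ∀ n, 1 ≤ n → 0 < d n) (n : ℕ) :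
    ‖term d (digits d x) n‖ ≤ (denom d n)⁻¹ := by
  have hP := denom_pos hd n
  have hD := hd (n + 1) n.succ_pos
  have hε : 1 + (digits d x (n + 1) : ℝ) ≤ d (n + 1) := by
    exact_mod_cast Nat.one_add_le_iff.mpr (digits_lt hD)
  rw [term, norm_div, norm_mul, norm_pow, norm_neg, norm_one, one_pow, one_mul, denom_succ,
    Real.norm_of_nonneg (by positivity), Real.norm_of_nonneg (by positivity), mul_comm,
    ← div_div, inv_eq_one_div]
  gcongr
  exact div_le_one_of_le₀ hε (by positivity)

theorem hasSum_term_digits (hd : ∀ n, 1 ≤ n → 2 ≤ d n) (hx : x ∈ Set.Icc (0 : ℝ) 1) :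
    HasSum (term d (digits d x)) x := by
  have hd₀ : ∀ n, 1 ≤ n → 0 < d n := fun n hn => by have := hd n hn; omega
  have hsummable : Summable (term d (digits d x)) :=
    .of_norm_bounded (summable_geometric_of_lt_one (by norm_num) (by norm_num))
      fun n => (norm_term_le hd₀ n).trans (inv_denom_le hd n)
  have herror : Tendsto (fun N => (-1) ^ N * remainder d x N / denom d N) atTop (𝓝 0) := by
    refine squeeze_zero_norm (fun N => ?_)
      (tendsto_pow_atTop_nhds_zero_of_lt_one (by norm_num) (by norm_num : (2 : ℝ)⁻¹ < 1))
    have hr := remainder_mem_Icc (d := d) hx N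
    rw [norm_div, norm_mul, norm_pow, norm_neg, norm_one, one_pow, one_mul,
      Real.norm_of_nonneg hr.1, Real.norm_of_nonneg (denom_pos hd₀ N).le]
    calc remainder d x N / denom d N ≤ 1 / denom d N := by
          gcongr
          · exact (denom_pos hd₀ N).le
          · exact hr.2
      _ ≤ 2⁻¹ ^ N := by rw [one_div]; exact inv_denom_le hd N
  rw [hsummable.hasSum_iff_tendsto_nat]
  simpa using (tendsto_const_nhds (x := x)).sub herror |>.congr
    fun N => by rw [← sub_sum_term_eq hd₀ N, sub_sub_cancel]

end Expansion

end NegaCantor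

open NegaCantor in
/-- Every x ∈ [0,1] admits a representation
x = ∑_{n=1}^∞ (-1)^{n+1}(1+ε_n)/(d₁⋯d_n) with digits ε_n ∈ {0,…,d_n−1}. -/
theorem nega_cantor_representation (d : ℕ → ℕ) (hd : ∀ n, 1 ≤ n → 2 ≤ d n) (x : ℝ)
    (hx : x ∈ Set.Icc (0 : ℝ) 1) :
    ∃ ε : ℕ → ℕ, (∀ n, 1 ≤ n → ε n < d n) ∧
      x = ∑' n : ℕ, (-1 : ℝ) ^ (n + 2) * (1 + (ε (n + 1) : ℝ)) /
            ∏ j ∈ Finset.Icc 1 (n + 1), (d j : ℝ) :=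
  ⟨digits d x, fun n hn => digits_lt (by have := hd n hn; omega),
    (hasSum_term_digits hd hx).tsum_eq.symm⟩
end

section
/- If two digit sequences (ε_n), (ε'_n) agree in positions 1,…,m−1 and ε_m = ε'_m + 1, and their alternating Cantor series are equal, then necessarily ε_{m+2i−1} = d_{m+2i−1}−1, ε_{m+2i} = 0, ε'_{m+2i−1} = 0, and ε'_{m+2i} = d_{m+2i}−1 for all i ≥ 1. -/
open Finset Filter


/-- If (ε_n), (ε'_n) agree in positions 1,…,m−1, ε_m = ε'_m + 1, and their
alternating Cantor series are equal, then necessarily ε_{m+2i−1} = d_{m+2i−1}−1,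
ε_{m+2i} = 0, ε'_{m+2i−1} = 0, ε'_{m+2i} = d_{m+2i}−1 for all i ≥ 1. -/
theorem alternating_cantor_eq_forces_tail (d : ℕ → ℕ) (hd : ∀ n, 1 ≤ n → 2 ≤ d n)
    (ε ε' : ℕ → ℕ) (hε : ∀ n, 1 ≤ n → ε n < d n) (hε' : ∀ n, 1 ≤ n → ε' n < d n)
    (m : ℕ) (hm : 1 ≤ m)
    (hagree : ∀ n, 1 ≤ n → n < m → ε n = ε' n)
    (hstep : ε m = ε' m + 1)
    (heq : ∑' n : ℕ, (-1 : ℝ) ^ (n + 1) * (ε (n + 1) : ℝ) /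
            ∏ j ∈ Finset.Icc 1 (n + 1), (d j : ℝ) =
          ∑' n : ℕ, (-1 : ℝ) ^ (n + 1) * (ε' (n + 1) : ℝ) /
            ∏ j ∈ Finset.Icc 1 (n + 1), (d j : ℝ)) :
    ∀ i : ℕ,
      ε (m + 2 * i + 1) = d (m + 2 * i + 1) - 1 ∧ ε (m + 2 * i + 2) = 0 ∧
      ε' (m + 2 * i + 1) = 0 ∧ ε' (m + 2 * i + 2) = d (m + 2 * i + 2) - 1 := by
  set P : ℕ → ℝ := fun n => ∏ j ∈ Finset.Icc 1 n, (d j : ℝ) with hPdef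
  have hPpos : ∀ n, 0 < P n := by
    intro n
    apply Finset.prod_pos
    intro j hj
    have := hd j (Finset.mem_Icc.mp hj).1
    positivity
  have hPrec : ∀ n, P (n + 1) = P n * d (n + 1) := by
    intro n
    simp [hPdef, Finset.prod_Icc_succ_top (Nat.le_add_left 1 n)]
  have hPge : ∀ n, (2 : ℝ) ^ n ≤ P n := by
    intro n
    induction n with
    | zero => simp [hPdef]
    | succ k ih =>
        rw [hPrec, pow_succ]
        have h2 : (2 : ℝ) ≤ d (k + 1) := by exact_mod_cast hd (k + 1) (Nat.le_add_left 1 k)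
        have := hPpos k
        nlinarith
  -- bound on 1/P
  have hinv : ∀ n, 1 / P n ≤ (1 / 2 : ℝ) ^ n := by
    intro n
    rw [div_pow, one_pow]
    exact one_div_le_one_div_of_le (by positivity) (hPge n)
  -- summability of a generic digit series
  have hsum_gen : ∀ (e : ℕ → ℕ), (∀ n, 1 ≤ n → e n < d n) →
      Summable (fun n : ℕ => (-1 : ℝ) ^ (n + 1) * (e (n + 1) : ℝ) / P (n + 1)) := by
    intro e he
    apply Summable.of_abs
    apply Summable.of_nonneg_of_le (fun n => abs_nonneg _)
      (f := fun n => (1 / 2 : ℝ) ^ n)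
    · intro n
      have h1 : |(-1 : ℝ) ^ (n + 1) * (e (n + 1) : ℝ) / P (n + 1)|
          = (e (n + 1) : ℝ) / P (n + 1) := by
        rw [abs_div, abs_mul, abs_pow, abs_neg, abs_one, one_pow, one_mul,
          abs_of_nonneg (by positivity : (0:ℝ) ≤ (e (n+1) : ℝ)),
          abs_of_pos (hPpos (n + 1))]
      rw [h1]
      calc (e (n + 1) : ℝ) / P (n + 1) ≤ (d (n + 1) : ℝ) / P (n + 1) := by
            gcongr
            exact_mod_cast (he (n + 1) (Nat.le_add_left 1 n)).le
        _ = 1 / P n := by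
            rw [hPrec]
            have h0 : (d (n+1) : ℝ) ≠ 0 := by
              have := hd (n+1) (Nat.le_add_left 1 n); positivity
            rw [mul_comm, div_mul_eq_div_div, div_self h0]
        _ ≤ (1 / 2 : ℝ) ^ n := hinv n
    · exact summable_geometric_of_lt_one (by norm_num) (by norm_num)
  -- the difference series
  set g : ℕ → ℝ := fun n => (-1 : ℝ) ^ (n + 1) * ((ε (n + 1) : ℝ) - (ε' (n + 1) : ℝ)) / P (n + 1)
    with hgdef
  have hsA := hsum_gen ε hε
  have hsB := hsum_gen ε' hε'
  have hgeq : g = fun n => (-1 : ℝ) ^ (n + 1) * (ε (n + 1) : ℝ) / P (n + 1)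
      - (-1 : ℝ) ^ (n + 1) * (ε' (n + 1) : ℝ) / P (n + 1) := by
    funext n; simp only [hgdef]; ring
  have hsg : Summable g := by rw [hgeq]; exact hsA.sub hsB
  have htg : ∑' n, g n = 0 := by
    rw [hgeq, Summable.tsum_sub hsA hsB, heq, sub_self]
  -- the first part of the series
  have hfirst : ∑ n ∈ Finset.range m, g n = (-1 : ℝ) ^ m / P m := by
    rw [Finset.sum_eq_single (m - 1)]
    · have h1 : m - 1 + 1 = m := Nat.succ_pred_eq_of_pos hm
      simp only [hgdef, h1, hstep]
      push_cast
      ring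
    · intro b hb hne
      have hb' : b + 1 < m := by
        have := Finset.mem_range.mp hb; omega
      have := hagree (b + 1) (Nat.le_add_left 1 b) hb'
      simp [hgdef, this]
    · intro h; exact absurd (Finset.mem_range.mpr (by omega)) h
  have htail : ∑' n, g (n + m) = -((-1 : ℝ) ^ m / P m) := by
    have h2 : ∑ n ∈ Finset.range m, g n + ∑' n, g (n + m) = 0 := by
      rw [Summable.sum_add_tsum_nat_add m hsg, htg]
    rw [hfirst] at h2; linarith
  -- telescoping sum
  have hT : HasSum (fun n : ℕ => ((d (n + m + 1) : ℝ) - 1) / P (n + m + 1)) (1 / P m) := by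
    have hterm : ∀ n : ℕ, ((d (n + m + 1) : ℝ) - 1) / P (n + m + 1)
        = 1 / P (n + m) - 1 / P (n + m + 1) := by
      intro n
      rw [hPrec]
      have h0 : (0 : ℝ) < d (n + m + 1) := by
        have := hd (n + m + 1) (by omega); positivity
      have hp := hPpos (n + m)
      field_simp
    have hnn : ∀ n : ℕ, 0 ≤ ((d (n + m + 1) : ℝ) - 1) / P (n + m + 1) := by
      intro n
      have h1 : (1 : ℝ) ≤ d (n + m + 1) := by
        have := hd (n + m + 1) (by omega); exact_mod_cast by omega
      exact div_nonneg (by linarith) (hPpos _).le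
    rw [hasSum_iff_tendsto_nat_of_nonneg hnn]
    have hps : ∀ N, ∑ n ∈ Finset.range N, ((d (n + m + 1) : ℝ) - 1) / P (n + m + 1)
        = 1 / P m - 1 / P (N + m) := by
      intro N
      calc ∑ n ∈ Finset.range N, ((d (n + m + 1) : ℝ) - 1) / P (n + m + 1)
          = ∑ n ∈ Finset.range N, (1 / P (n + m) - 1 / P (n + 1 + m)) := by
            apply Finset.sum_congr rfl; intro n _
            rw [show n + 1 + m = n + m + 1 from by omega, hterm]
        _ = 1 / P (0 + m) - 1 / P (N + m) := Finset.sum_range_sub' (fun n => 1 / P (n + m)) N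
        _ = 1 / P m - 1 / P (N + m) := by rw [Nat.zero_add]
    simp only [hps]
    have hto : Filter.Tendsto (fun N : ℕ => 1 / P (N + m)) Filter.atTop (nhds 0) := by
      apply squeeze_zero (fun N => by positivity) (g := fun N : ℕ => (1 / 2 : ℝ) ^ N)
      · intro N
        calc 1 / P (N + m) ≤ (1 / 2 : ℝ) ^ (N + m) := hinv (N + m)
          _ ≤ (1 / 2 : ℝ) ^ N := by
            apply pow_le_pow_of_le_one (by norm_num) (by norm_num) (by omega)
      · exact tendsto_pow_atTop_nhds_zero_of_lt_one (by norm_num) (by norm_num)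
    simpa using tendsto_const_nhds.sub hto
  -- nonnegative series summing to zero
  set h : ℕ → ℝ := fun n => ((d (n + m + 1) : ℝ) - 1) / P (n + m + 1)
    - (-1 : ℝ) ^ (m + 1) * g (n + m) with hhdef
  have habs : ∀ k, |g k| ≤ ((d (k + 1) : ℝ) - 1) / P (k + 1) := by
    intro k
    have h1 : |g k| = |(ε (k + 1) : ℝ) - (ε' (k + 1) : ℝ)| / P (k + 1) := by
      rw [hgdef]
      rw [abs_div, abs_mul, abs_pow, abs_neg, abs_one, one_pow, one_mul,
        abs_of_pos (hPpos (k + 1))]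
    rw [h1]
    gcongr
    have hu : (ε (k + 1) : ℝ) ≤ (d (k + 1) : ℝ) - 1 := by
      have := hε (k + 1) (by omega)
      have : (ε (k + 1) : ℝ) + 1 ≤ (d (k + 1) : ℝ) := by exact_mod_cast this
      linarith
    have hu' : (ε' (k + 1) : ℝ) ≤ (d (k + 1) : ℝ) - 1 := by
      have := hε' (k + 1) (by omega)
      have : (ε' (k + 1) : ℝ) + 1 ≤ (d (k + 1) : ℝ) := by exact_mod_cast this
      linarith
    rw [abs_sub_le_iff]
    constructor <;>
      linarith [hu, hu', (Nat.cast_nonneg (ε (k + 1)) : (0 : ℝ) ≤ ε (k + 1)),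
        (Nat.cast_nonneg (ε' (k + 1)) : (0 : ℝ) ≤ ε' (k + 1))]
  have hgsum' : Summable (fun n => g (n + m)) := (summable_nat_add_iff m).2 hsg
  have hhnn : ∀ n, 0 ≤ h n := by
    intro n
    have h1 := habs (n + m)
    have h2 : (-1 : ℝ) ^ (m + 1) * g (n + m) ≤ |g (n + m)| := by
      calc (-1 : ℝ) ^ (m + 1) * g (n + m) ≤ |(-1 : ℝ) ^ (m + 1) * g (n + m)| := le_abs_self _
        _ = |g (n + m)| := by
          rw [abs_mul, abs_pow, abs_neg, abs_one, one_pow, one_mul]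
    have h3 : n + m + 1 = (n + m) + 1 := rfl
    simp only [hhdef, h3]
    linarith
  have hhs : Summable h := hT.summable.sub (hgsum'.mul_left _)
  have hhzero : ∑' n, h n = 0 := by
    simp only [hhdef]
    rw [Summable.tsum_sub hT.summable (hgsum'.mul_left _), hT.tsum_eq, tsum_mul_left, htail]
    have hodd : (-1 : ℝ) ^ (m + 1) * (-1 : ℝ) ^ m = -1 := by
      rw [← pow_add]
      exact Odd.neg_one_pow ⟨m, by ring⟩
    have hx : (-1 : ℝ) ^ (m + 1) * -((-1 : ℝ) ^ m / P m) = 1 / P m := by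
      rw [mul_neg, ← mul_div_assoc, hodd]
      ring
    rw [hx, sub_self]
  -- extract pointwise equality
  have key : ∀ n : ℕ, (-1 : ℝ) ^ n * ((ε (n + m + 1) : ℝ) - (ε' (n + m + 1) : ℝ))
      = (d (n + m + 1) : ℝ) - 1 := by
    intro n
    have h0 : h n = 0 := by
      have hle : h n ≤ 0 := hhzero ▸ Summable.le_tsum hhs n fun j _ => hhnn j
      linarith [hhnn n]
    have h1 : (-1 : ℝ) ^ (m + 1) * g (n + m) = ((d (n + m + 1) : ℝ) - 1) / P (n + m + 1) := by
      simp only [hhdef] at h0; linarith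
    have h2 : g (n + m) = (-1 : ℝ) ^ (n + m + 1) * ((ε (n + m + 1) : ℝ) - (ε' (n + m + 1) : ℝ))
        / P (n + m + 1) := by rw [hgdef]
    rw [h2, ← mul_div_assoc] at h1
    have hP := (hPpos (n + m + 1)).ne'
    have h3 : (-1 : ℝ) ^ (m + 1) * ((-1 : ℝ) ^ (n + m + 1)
        * ((ε (n + m + 1) : ℝ) - (ε' (n + m + 1) : ℝ)))
        = (d (n + m + 1) : ℝ) - 1 := by
      have h4 := congrArg (· * P (n + m + 1)) h1
      simp only [div_mul_cancel₀ _ hP] at h4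
      linarith [h4]
    have hpow : (-1 : ℝ) ^ (m + 1) * (-1 : ℝ) ^ (n + m + 1) = (-1 : ℝ) ^ n := by
      rw [← pow_add]
      have he : m + 1 + (n + m + 1) = n + 2 * (m + 1) := by ring
      rw [he, pow_add, pow_mul]
      norm_num
    calc (-1 : ℝ) ^ n * ((ε (n + m + 1) : ℝ) - (ε' (n + m + 1) : ℝ))
        = (-1 : ℝ) ^ (m + 1) * ((-1 : ℝ) ^ (n + m + 1)
            * ((ε (n + m + 1) : ℝ) - (ε' (n + m + 1) : ℝ))) := by
          rw [← mul_assoc, hpow]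
      _ = (d (n + m + 1) : ℝ) - 1 := h3
  -- extraction of digit values
  have extract : ∀ (a b : ℕ → ℕ), (∀ n, 1 ≤ n → a n < d n) → ∀ k, 1 ≤ k →
      ((a k : ℝ) - (b k : ℝ) = (d k : ℝ) - 1) → a k = d k - 1 ∧ b k = 0 := by
    intro a b ha k hk hab
    have hdk : 1 ≤ d k := by have := hd k hk; omega
    have h1 : (a k : ℝ) = ((b k + (d k - 1) : ℕ) : ℝ) := by
      push_cast [Nat.cast_sub hdk]
      linarith
    have h2 : a k = b k + (d k - 1) := Nat.cast_injective h1
    have := ha k hk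
    omega
  intro i
  have hk1 : (ε (m + 2 * i + 1) : ℝ) - (ε' (m + 2 * i + 1) : ℝ)
      = (d (m + 2 * i + 1) : ℝ) - 1 := by
    have hkey := key (2 * i)
    rw [show 2 * i + m + 1 = m + 2 * i + 1 from by ring] at hkey
    rw [pow_mul] at hkey
    norm_num at hkey
    exact hkey
  have hk2 : (ε' (m + 2 * i + 2) : ℝ) - (ε (m + 2 * i + 2) : ℝ)
      = (d (m + 2 * i + 2) : ℝ) - 1 := by
    have hkey := key (2 * i + 1)
    rw [show 2 * i + 1 + m + 1 = m + 2 * i + 2 from by ring] at hkey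
    rw [pow_succ, pow_mul] at hkey
    norm_num at hkey
    linarith
  obtain ⟨e1, e2⟩ := extract ε ε' hε (m + 2 * i + 1) (by omega) hk1
  obtain ⟨e3, e4⟩ := extract ε' ε hε' (m + 2 * i + 2) (by omega) hk2
  exact ⟨e1, e4, e2, e3⟩
end

section
/- The two Cantor series representations are related by: ∑_{n=1}^∞ (-1)^{n+1}(1+ε_n)/(d₁⋯d_n) = ∑_{n=1}^∞ δ_n/(d₁⋯d_n), where δ_n = ε_n for odd n and δ_n = d_n − 1 − ε_n for even n. -/
/-!
Subtracting the two series term by term, the difference at an odd place `2k+1` is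
`((1 + ε) - ε) / D_{2k+1} = 1 / D_{2k+1}`, and at the following even place it is
`-((1 + ε) + (d - 1 - ε)) / D_{2k+2} = -d_{2k+2} / D_{2k+2} = -1 / D_{2k+1}`.
So the partial sums of the difference vanish along even indices, and its sum is `0`;
both series converge since `D_n ≥ 2^n`.
-/

open Finset Filter

theorem tsum_eq_zero_of_odd_eq_neg_even {G : Type*} [AddCommGroup G] [TopologicalSpace G]
    [T2Space G] {h : ℕ → G} (hh : Summable h) (hodd : ∀ k, h (2 * k + 1) = -h (2 * k)) :
    ∑' n, h n = 0 := by
  have heven_partial : ∀ n, ∑ i ∈ range (2 * n), h i = 0 := by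
    intro n
    induction n with
    | zero => simp
    | succ n ih =>
      rw [show 2 * (n + 1) = 2 * n + 1 + 1 by ring, sum_range_succ, sum_range_succ, ih, hodd]
      abel
  have hlim := hh.hasSum.tendsto_sum_nat.comp (strictMono_mul_left_of_pos two_pos).tendsto_atTop
  simp only [Function.comp_def, heven_partial] at hlim
  exact tendsto_nhds_unique hlim tendsto_const_nhds

noncomputable def cantorDenom (d : ℕ → ℕ) (n : ℕ) : ℝ := ∏ j ∈ Icc 1 n, (d j : ℝ)

def positiveDigit (d ε : ℕ → ℕ) (n : ℕ) : ℕ := if Odd n then ε n else d n - 1 - ε n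

section

variable {d ε : ℕ → ℕ}

theorem cantorDenom_succ (n : ℕ) : cantorDenom d (n + 1) = cantorDenom d n * d (n + 1) :=
  prod_Icc_succ_top (Nat.le_add_left 1 n) _

theorem two_pow_le_cantorDenom (hd : ∀ n, 1 ≤ n → 2 ≤ d n) (n : ℕ) :
    (2 : ℝ) ^ n ≤ cantorDenom d n := by
  calc (2 : ℝ) ^ n = ∏ _j ∈ Icc 1 n, (2 : ℝ) := by simp
    _ ≤ cantorDenom d n :=
      prod_le_prod (fun _ _ => by positivity) fun j hj => by exact_mod_cast hd j (mem_Icc.1 hj).1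

theorem cantorDenom_pos (hd : ∀ n, 1 ≤ n → 2 ≤ d n) (n : ℕ) : 0 < cantorDenom d n :=
  (pow_pos two_pos n).trans_le (two_pow_le_cantorDenom hd n)

theorem summable_div_cantorDenom (hd : ∀ n, 1 ≤ n → 2 ≤ d n) {a : ℕ → ℝ}
    (ha : ∀ n, |a n| ≤ d (n + 1)) : Summable fun n => a n / cantorDenom d (n + 1) := by
  refine Summable.of_norm_bounded summable_geometric_two fun n => ?_
  have hDpos := cantorDenom_pos hd
  have hdpos : (0 : ℝ) < d (n + 1) := by exact_mod_cast (hd (n + 1) (by omega)).trans_lt' two_pos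
  calc ‖a n / cantorDenom d (n + 1)‖ = |a n| / cantorDenom d (n + 1) := by
        rw [Real.norm_eq_abs, abs_div, abs_of_pos (hDpos _)]
    _ ≤ d (n + 1) / cantorDenom d (n + 1) := by gcongr; exacts [(hDpos _).le, ha n]
    _ = 1 / cantorDenom d n := by rw [cantorDenom_succ]; field_simp [hdpos.ne', (hDpos n).ne']
    _ ≤ 1 / 2 ^ n := by gcongr; exact two_pow_le_cantorDenom hd n
    _ = (1 / 2) ^ n := by rw [div_pow, one_pow]

theorem tsum_div_cantorDenom_eq_of_digit_gaps (hd : ∀ n, 1 ≤ n → 2 ≤ d n)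
    {a b : ℕ → ℝ} (ha : ∀ n, |a n| ≤ d (n + 1)) (hb : ∀ n, |b n| ≤ d (n + 1))
    (heven : ∀ k, a (2 * k) - b (2 * k) = 1)
    (hodd : ∀ k, a (2 * k + 1) - b (2 * k + 1) = -d (2 * k + 2)) :
    ∑' n, a n / cantorDenom d (n + 1) = ∑' n, b n / cantorDenom d (n + 1) := by
  have hsa := summable_div_cantorDenom hd ha
  have hsb := summable_div_cantorDenom hd hb
  rw [← sub_eq_zero, ← hsa.tsum_sub hsb]
  refine tsum_eq_zero_of_odd_eq_neg_even (hsa.sub hsb) fun k => ?_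
  have hdpos : (0 : ℝ) < d (2 * k + 2) := by
    exact_mod_cast (hd (2 * k + 2) (by omega)).trans_lt' two_pos
  rw [div_sub_div_same, div_sub_div_same, heven, hodd, cantorDenom_succ (2 * k + 1)]
  field_simp [hdpos.ne', (cantorDenom_pos hd (2 * k + 1)).ne']

theorem positiveDigit_lt {n : ℕ} (h : ε n < d n) : positiveDigit d ε n < d n := by
  unfold positiveDigit; split <;> omega

theorem positiveDigit_of_odd {n : ℕ} (hn : Odd n) : positiveDigit d ε n = ε n :=
  if_pos hn

theorem positiveDigit_add_add_one_of_even {n : ℕ} (hn : Even n) (h : ε n < d n) :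
    positiveDigit d ε n + ε n + 1 = d n := by
  rw [positiveDigit, if_neg (Nat.not_odd_iff_even.2 hn)]
  omega

end

/-- ∑_{n≥1} (-1)^{n+1}(1+ε_n)/(d₁⋯d_n) = ∑_{n≥1} δ_n/(d₁⋯d_n) where
δ_n = ε_n for odd n and δ_n = d_n − 1 − ε_n for even n. -/
theorem nega_eq_positive_cantor (d : ℕ → ℕ) (hd : ∀ n, 1 ≤ n → 2 ≤ d n)
    (ε : ℕ → ℕ) (hε : ∀ n, 1 ≤ n → ε n < d n) :
    ∑' n : ℕ, (-1 : ℝ) ^ (n + 2) * (1 + (ε (n + 1) : ℝ)) /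
        ∏ j ∈ Finset.Icc 1 (n + 1), (d j : ℝ) =
    ∑' n : ℕ, (((if Odd (n + 1) then ε (n + 1) else d (n + 1) - 1 - ε (n + 1)) : ℕ) : ℝ) /
        ∏ j ∈ Finset.Icc 1 (n + 1), (d j : ℝ) := by
  have hε' : ∀ n, ε (n + 1) < d (n + 1) := fun n => hε (n + 1) (by omega)
  refine tsum_div_cantorDenom_eq_of_digit_gaps (b := fun n => (positiveDigit d ε (n + 1) : ℝ)) hd
    (fun n => ?_) (fun n => ?_) (fun k => ?_) (fun k => ?_)
  · rw [abs_mul, abs_neg_one_pow, one_mul, abs_of_nonneg (by positivity), add_comm]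
    exact_mod_cast hε' n
  · rw [abs_of_nonneg (by positivity)]
    exact_mod_cast (positiveDigit_lt (hε' n)).le
  · rw [Even.neg_one_pow ⟨k + 1, by ring⟩, positiveDigit_of_odd ⟨k, rfl⟩]
    ring
  · have hsum := positiveDigit_add_add_one_of_even (ε := ε) ⟨k + 1, by ring⟩ (hε' (2 * k + 1))
    rw [Odd.neg_one_pow ⟨k + 1, by ring⟩, ← hsum]
    push_cast
    ring
end

section
/- Under the assumptions on P with all entries p_{i,n} > 0, the function F̃(x) = β_{ε₁(x),1} + ∑_{n=2}^∞ β̃_{ε_n(x),n} ∏_{j=1}^{n−1} p̃_{ε_j(x),j} (with β̃, p̃ using digit i for odd n and d_n−1−i for even n) is strictly increasing on [0,1], where x has the nega-(d_n) representation x = ∑_{n≥1} (−1)^{n+1}(1+ε_n(x))/(d₁⋯d_n). -/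
/-- The nega-(d_n) value of a digit sequence: ∑_{n≥1} (-1)^{n+1}(1+ε_n)/(d₁⋯d_n). -/
noncomputable def negaVal (d : ℕ → ℕ) (ε : ℕ → ℕ) : ℝ :=
  ∑' n : ℕ, (-1 : ℝ) ^ (n + 2) * (1 + (ε (n + 1) : ℝ)) / ∏ j ∈ Finset.Icc 1 (n + 1), (d j : ℝ)

/-- ε is a nega-(d_n) representation of x. -/
def IsNegaRepr (d : ℕ → ℕ) (ε : ℕ → ℕ) (x : ℝ) : Prop :=
  (∀ n, 1 ≤ n → ε n < d n) ∧ x = negaVal d ε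

/-- β_{i,n} = ∑_{t<i} p_{t,n}. -/
noncomputable def beta (p : ℕ → ℕ → ℝ) (i n : ℕ) : ℝ := ∑ t ∈ Finset.range i, p t n

/-- p̃_{i,n}: digit i for odd n, digit d_n−1−i for even n. -/
noncomputable def ptil (d : ℕ → ℕ) (p : ℕ → ℕ → ℝ) (i n : ℕ) : ℝ :=
  if Odd n then p i n else p (d n - 1 - i) n

/-- β̃_{i,n}: β at digit i for odd n, at d_n−1−i for even n. -/
noncomputable def betatil (d : ℕ → ℕ) (p : ℕ → ℕ → ℝ) (i n : ℕ) : ℝ :=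
  if Odd n then beta p i n else beta p (d n - 1 - i) n

/-- F̃ value on a digit sequence:
β_{ε₁,1} + ∑_{n≥2} β̃_{ε_n,n} ∏_{j<n} p̃_{ε_j,j}. -/
noncomputable def Ftil (d : ℕ → ℕ) (p : ℕ → ℕ → ℝ) (ε : ℕ → ℕ) : ℝ :=
  beta p (ε 1) 1 +
    ∑' n : ℕ, betatil d p (ε (n + 2)) (n + 2) * ∏ j ∈ Finset.Icc 1 (n + 1), ptil d p (ε j) j


open Filter Finset Topology

def IsDigitSeq (d e : ℕ → ℕ) : Prop := ∀ n, 1 ≤ n → e n < d n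

structure IsDigitWeights (d : ℕ → ℕ) (p : ℕ → ℕ → ℝ) : Prop where
  pos : ∀ n, 1 ≤ n → ∀ i, i < d n → 0 < p i n
  sum_eq_one : ∀ n, 1 ≤ n → ∑ i ∈ range (d n), p i n = 1

/-- The mass of the cylinder of rank `m` with digits `e 1, …, e m`. -/
noncomputable def digitProd (p : ℕ → ℕ → ℝ) (e : ℕ → ℕ) (m : ℕ) : ℝ :=
  ∏ j ∈ Icc 1 m, p (e j) j

noncomputable def distTerm (p : ℕ → ℕ → ℝ) (e : ℕ → ℕ) (k : ℕ) : ℝ :=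
  beta p (e (k + 1)) (k + 1) * digitProd p e k

/-- The distribution function of independent digits with laws `p · n`, at the point with
digits `e`. -/
noncomputable def distVal (p : ℕ → ℕ → ℝ) (e : ℕ → ℕ) : ℝ := ∑' k, distTerm p e k

noncomputable def distTail (p : ℕ → ℕ → ℝ) (e : ℕ → ℕ) (m : ℕ) : ℝ :=
  ∑' k, distTerm p e (k + m)

lemma beta_zero (p : ℕ → ℕ → ℝ) (n : ℕ) : beta p 0 n = 0 := sum_range_zero _

lemma beta_succ (p : ℕ → ℕ → ℝ) (i n : ℕ) : beta p (i + 1) n = beta p i n + p i n :=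
  sum_range_succ _ _

lemma Nat.forall_lt_of_step {P Q : ℕ → Prop} (step : ∀ j, P j → P (j + 1) ∧ Q (j + 1))
    {m : ℕ} (h : P m) : ∀ k, m < k → Q k := by
  have hP : ∀ j, P (m + j) := fun j => by
    induction j with
    | zero => exact h
    | succ j ih => exact (step _ ih).1
  intro k hk
  obtain ⟨j, rfl⟩ := Nat.exists_eq_add_of_lt hk
  exact (step _ (hP j)).2

section Basic

variable {p : ℕ → ℕ → ℝ} {e f : ℕ → ℕ}

lemma digitProd_zero : digitProd p e 0 = 1 := by simp [digitProd]

lemma digitProd_succ (m : ℕ) :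
    digitProd p e (m + 1) = digitProd p e m * p (e (m + 1)) (m + 1) :=
  prod_Icc_succ_top (by omega) _

lemma digitProd_congr {m : ℕ} (h : ∀ k, 1 ≤ k → k ≤ m → e k = f k) :
    digitProd p e m = digitProd p f m :=
  prod_congr rfl fun j hj => by rw [h j (mem_Icc.1 hj).1 (mem_Icc.1 hj).2]

lemma distTerm_congr {m : ℕ} (h : ∀ k, 1 ≤ k → k ≤ m + 1 → e k = f k) :
    distTerm p e m = distTerm p f m := by
  rw [distTerm, distTerm, h (m + 1) (by omega) le_rfl,
    digitProd_congr fun k hk hkm => h k hk (by omega)]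

lemma distVal_congr (h : ∀ k, 1 ≤ k → e k = f k) : distVal p e = distVal p f :=
  tsum_congr fun _ => distTerm_congr fun k hk _ => h k hk

lemma distTail_eq_zero {m : ℕ} (h : ∀ k, m < k → e k = 0) : distTail p e m = 0 := by
  simp [distTail, distTerm, h (_ + m + 1) (by omega), beta_zero]

end Basic

namespace IsDigitWeights

variable {d : ℕ → ℕ} {p : ℕ → ℕ → ℝ} (hw : IsDigitWeights d p) {e f : ℕ → ℕ}
include hw

lemma beta_strictMonoOn {n : ℕ} (hn : 1 ≤ n) :
    StrictMonoOn (fun i => beta p i n) (Set.Iic (d n)) := fun i _ j hj hij =>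
  sum_lt_sum_of_subset (range_subset_range.2 hij.le) (mem_range.2 hij) (by simp)
    (hw.pos n hn i (hij.trans_le hj)) fun t ht _ =>
      (hw.pos n hn t ((mem_range.1 ht).trans_le hj)).le

lemma beta_nonneg {n i : ℕ} (hn : 1 ≤ n) (hi : i ≤ d n) : 0 ≤ beta p i n :=
  beta_zero p n ▸ (hw.beta_strictMonoOn hn).monotoneOn (Nat.zero_le _) hi (Nat.zero_le i)

lemma beta_add_le_one {n i : ℕ} (hn : 1 ≤ n) (hi : i < d n) : beta p i n + p i n ≤ 1 := by
  rw [← beta_succ, ← hw.sum_eq_one n hn]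
  exact (hw.beta_strictMonoOn hn).monotoneOn (Set.mem_Iic.2 hi) (Set.mem_Iic.2 le_rfl) hi

lemma digitProd_pos (he : IsDigitSeq d e) (m : ℕ) : 0 < digitProd p e m :=
  prod_pos fun j hj => hw.pos j (mem_Icc.1 hj).1 _ (he j (mem_Icc.1 hj).1)

lemma distTerm_nonneg (he : IsDigitSeq d e) (k : ℕ) : 0 ≤ distTerm p e k :=
  mul_nonneg (hw.beta_nonneg (by omega) (he (k + 1) (by omega)).le) (hw.digitProd_pos he k).le

lemma distTerm_le (he : IsDigitSeq d e) (k : ℕ) :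
    distTerm p e k ≤ digitProd p e k - digitProd p e (k + 1) := by
  have := hw.beta_add_le_one (by omega) (he (k + 1) (by omega))
  have := hw.digitProd_pos he k
  rw [distTerm, digitProd_succ]
  nlinarith

lemma sum_distTerm_le (he : IsDigitSeq d e) (m K : ℕ) :
    ∑ k ∈ range K, distTerm p e (k + m) ≤ digitProd p e m - digitProd p e (K + m) := by
  calc ∑ k ∈ range K, distTerm p e (k + m)
      ≤ ∑ k ∈ range K, (digitProd p e (k + m) - digitProd p e (k + 1 + m)) :=
        sum_le_sum fun k _ => by rw [Nat.add_right_comm]; exact hw.distTerm_le he _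
    _ = digitProd p e m - digitProd p e (K + m) := by
        rw [sum_range_sub' (fun k => digitProd p e (k + m)), zero_add]

lemma summable_distTerm (he : IsDigitSeq d e) : Summable (distTerm p e) :=
  summable_of_sum_range_le (hw.distTerm_nonneg he) fun K => by
    simpa [digitProd_zero] using
      (hw.sum_distTerm_le he 0 K).trans (sub_le_self _ (hw.digitProd_pos he K).le)

lemma distTail_nonneg (he : IsDigitSeq d e) (m : ℕ) : 0 ≤ distTail p e m :=
  tsum_nonneg fun k => hw.distTerm_nonneg he (k + m)

lemma distTail_le (he : IsDigitSeq d e) (m : ℕ) : distTail p e m ≤ digitProd p e m :=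
  Real.tsum_le_of_sum_range_le (fun k => hw.distTerm_nonneg he (k + m)) fun K =>
    (hw.sum_distTerm_le he m K).trans (sub_le_self _ (hw.digitProd_pos he _).le)

lemma distVal_eq_sum_add_distTail (he : IsDigitSeq d e) (m : ℕ) :
    distVal p e = ∑ k ∈ range m, distTerm p e k + distTail p e m :=
  ((hw.summable_distTerm he).sum_add_tsum_nat_add m).symm

lemma distTail_eq_add (he : IsDigitSeq d e) (m : ℕ) :
    distTail p e m = distTerm p e m + distTail p e (m + 1) := by
  have h := hw.distVal_eq_sum_add_distTail he m
  rw [hw.distVal_eq_sum_add_distTail he (m + 1), sum_range_succ] at h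
  linarith

lemma distTail_succ_eq_of_distTail_eq (he : IsDigitSeq d e) {j : ℕ}
    (h : distTail p e j = digitProd p e j) :
    distTail p e (j + 1) = digitProd p e (j + 1) ∧ e (j + 1) = d (j + 1) - 1 := by
  have hsplit := hw.distTail_eq_add he j
  have hterm := hw.distTerm_le he j
  have htail := hw.distTail_le he (j + 1)
  refine ⟨by linarith, ?_⟩
  have heq : distTerm p e j = digitProd p e j - digitProd p e (j + 1) := by linarith
  rw [distTerm, digitProd_succ] at heq
  have hone : beta p (e (j + 1)) (j + 1) + p (e (j + 1)) (j + 1) = 1 := by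
    have := (mul_eq_zero.1 (show digitProd p e j *
      (beta p (e (j + 1)) (j + 1) + p (e (j + 1)) (j + 1) - 1) = 0 by
        linear_combination heq)).resolve_left (hw.digitProd_pos he j).ne'
    linarith
  rw [← beta_succ, ← hw.sum_eq_one (j + 1) (by omega)] at hone
  have : e (j + 1) + 1 = d (j + 1) := (hw.beta_strictMonoOn (by omega)).injOn
    (Set.mem_Iic.2 (he (j + 1) (by omega))) (Set.mem_Iic.2 le_rfl) hone
  omega

lemma distTail_succ_eq_zero_of_distTail_eq_zero (he : IsDigitSeq d e) {j : ℕ}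
    (h : distTail p e j = 0) : distTail p e (j + 1) = 0 ∧ e (j + 1) = 0 := by
  have hsplit := hw.distTail_eq_add he j
  have hterm := hw.distTerm_nonneg he j
  have htail := hw.distTail_nonneg he (j + 1)
  refine ⟨by linarith, ?_⟩
  have hzero : beta p (e (j + 1)) (j + 1) = 0 :=
    (mul_eq_zero.1 (show distTerm p e j = 0 by linarith)).resolve_right
      (hw.digitProd_pos he j).ne'
  rw [← beta_zero p (j + 1)] at hzero
  exact (hw.beta_strictMonoOn (by omega)).injOn
    (Set.mem_Iic.2 (he (j + 1) (by omega)).le) (Set.mem_Iic.2 (Nat.zero_le _)) hzero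

lemma eq_pred_of_distTail_eq (he : IsDigitSeq d e) {m : ℕ}
    (h : distTail p e m = digitProd p e m) : ∀ k, m < k → e k = d k - 1 :=
  Nat.forall_lt_of_step (P := fun j => distTail p e j = digitProd p e j)
    (Q := fun k => e k = d k - 1) (fun _ => hw.distTail_succ_eq_of_distTail_eq he) h

lemma eq_zero_of_distTail_eq_zero (he : IsDigitSeq d e) {m : ℕ}
    (h : distTail p e m = 0) : ∀ k, m < k → e k = 0 :=
  Nat.forall_lt_of_step (P := fun j => distTail p e j = 0) (Q := fun k => e k = 0)
    (fun _ => hw.distTail_succ_eq_zero_of_distTail_eq_zero he) h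

lemma distTail_eq_digitProd (he : IsDigitSeq d e)
    (h0 : Tendsto (digitProd p e) atTop (𝓝 0)) {m : ℕ} (h : ∀ k, m < k → e k = d k - 1) :
    distTail p e m = digitProd p e m := by
  have hterm : ∀ k, distTerm p e (k + m) = digitProd p e (k + m) - digitProd p e (k + 1 + m) := by
    intro k
    have hd : 1 ≤ d (k + m + 1) := by have := he (k + m + 1) (by omega); omega
    have hone : beta p (e (k + m + 1)) (k + m + 1) + p (e (k + m + 1)) (k + m + 1) = 1 := by
      rw [← beta_succ, h _ (by omega), Nat.sub_add_cancel hd, beta, hw.sum_eq_one _ (by omega)]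
    rw [Nat.add_right_comm, digitProd_succ, distTerm]
    linear_combination digitProd p e (k + m) * hone
  have hsum : HasSum (fun k => distTerm p e (k + m)) (digitProd p e m) := by
    rw [hasSum_iff_tendsto_nat_of_nonneg (fun k => hw.distTerm_nonneg he _)]
    simp_rw [hterm, sum_range_sub' (fun k => digitProd p e (k + m)), zero_add]
    simpa using tendsto_const_nhds.sub (h0.comp (tendsto_add_atTop_nat m))
  exact hsum.tsum_eq

/-- The gap between two points whose digits first differ at place `m + 1`, as a sum of three
nonnegative quantities (when `e (m + 1) < f (m + 1)`). -/
lemma distVal_sub_distVal (he : IsDigitSeq d e) (hf : IsDigitSeq d f) {m : ℕ}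
    (hagree : ∀ k, 1 ≤ k → k ≤ m → e k = f k) :
    distVal p f - distVal p e =
      digitProd p e m * (beta p (f (m + 1)) (m + 1) - beta p (e (m + 1) + 1) (m + 1)) +
        (digitProd p e (m + 1) - distTail p e (m + 1)) + distTail p f (m + 1) := by
  have hsum : ∑ k ∈ range m, distTerm p f k = ∑ k ∈ range m, distTerm p e k :=
    sum_congr rfl fun k hk => distTerm_congr fun j hj hjk =>
      (hagree j hj (by have := mem_range.1 hk; omega)).symm
  rw [hw.distVal_eq_sum_add_distTail he m, hw.distVal_eq_sum_add_distTail hf m, hsum,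
    hw.distTail_eq_add he m, hw.distTail_eq_add hf m, distTerm, distTerm,
    ← digitProd_congr hagree, digitProd_succ, beta_succ]
  ring

lemma distVal_le_of_lex (he : IsDigitSeq d e) (hf : IsDigitSeq d f) {m : ℕ}
    (hagree : ∀ k, 1 ≤ k → k ≤ m → e k = f k) (hlt : e (m + 1) < f (m + 1)) :
    distVal p e ≤ distVal p f := by
  have hbeta := (hw.beta_strictMonoOn (n := m + 1) (by omega)).monotoneOn
    (Set.mem_Iic.2 (he (m + 1) (by omega))) (Set.mem_Iic.2 (hf (m + 1) (by omega)).le) hlt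
  have := hw.distVal_sub_distVal he hf hagree
  have := hw.digitProd_pos he m
  have := hw.distTail_le he (m + 1)
  have := hw.distTail_nonneg hf (m + 1)
  nlinarith

lemma boundary_of_distVal_eq (he : IsDigitSeq d e) (hf : IsDigitSeq d f) {m : ℕ}
    (hagree : ∀ k, 1 ≤ k → k ≤ m → e k = f k) (hlt : e (m + 1) < f (m + 1))
    (heq : distVal p e = distVal p f) :
    f (m + 1) = e (m + 1) + 1 ∧ (∀ k, m + 1 < k → e k = d k - 1) ∧
      ∀ k, m + 1 < k → f k = 0 := by
  have hbeta := (hw.beta_strictMonoOn (n := m + 1) (by omega)).monotoneOn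
    (Set.mem_Iic.2 (he (m + 1) (by omega))) (Set.mem_Iic.2 (hf (m + 1) (by omega)).le) hlt
  have hsub := hw.distVal_sub_distVal he hf hagree
  have hpos := hw.digitProd_pos he m
  have htail := hw.distTail_le he (m + 1)
  have htail' := hw.distTail_nonneg hf (m + 1)
  have hmul : 0 ≤ digitProd p e m *
      (beta p (f (m + 1)) (m + 1) - beta p (e (m + 1) + 1) (m + 1)) :=
    mul_nonneg hpos.le (sub_nonneg.2 hbeta)
  have hgap : beta p (f (m + 1)) (m + 1) = beta p (e (m + 1) + 1) (m + 1) := by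
    have := (mul_eq_zero.1 (show digitProd p e m *
      (beta p (f (m + 1)) (m + 1) - beta p (e (m + 1) + 1) (m + 1)) = 0 by linarith))
    linarith [this.resolve_left hpos.ne']
  refine ⟨(hw.beta_strictMonoOn (by omega)).injOn (Set.mem_Iic.2 (hf (m + 1) (by omega)).le)
      (Set.mem_Iic.2 (he (m + 1) (by omega))) hgap,
    hw.eq_pred_of_distTail_eq he (by linarith), hw.eq_zero_of_distTail_eq_zero hf (by linarith)⟩

lemma distVal_eq_of_boundary (he : IsDigitSeq d e) (hf : IsDigitSeq d f) {m : ℕ}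
    (hagree : ∀ k, 1 ≤ k → k ≤ m → e k = f k) (h0 : Tendsto (digitProd p e) atTop (𝓝 0))
    (hb : f (m + 1) = e (m + 1) + 1 ∧ (∀ k, m + 1 < k → e k = d k - 1) ∧
      ∀ k, m + 1 < k → f k = 0) :
    distVal p e = distVal p f := by
  have := hw.distVal_sub_distVal he hf hagree
  rw [hb.1, hw.distTail_eq_digitProd he h0 hb.2.1, distTail_eq_zero hb.2.2] at this
  linarith

end IsDigitWeights

theorem distVal_lt_of_distVal_lt {d : ℕ → ℕ} {p q : ℕ → ℕ → ℝ} {e f : ℕ → ℕ}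
    (hp : IsDigitWeights d p) (hq : IsDigitWeights d q) (he : IsDigitSeq d e)
    (hf : IsDigitSeq d f) (hq0 : Tendsto (digitProd q e) atTop (𝓝 0))
    (h : distVal q e < distVal q f) : distVal p e < distVal p f := by
  have hne : ∃ n, 1 ≤ n ∧ e n ≠ f n := by
    by_contra! hsame
    exact h.ne (distVal_congr hsame)
  obtain ⟨hn1, hn⟩ := Nat.find_spec hne
  obtain ⟨m, hm⟩ : ∃ m, Nat.find hne = m + 1 := ⟨_, (Nat.succ_pred_eq_of_pos hn1).symm⟩
  have hagree : ∀ k, 1 ≤ k → k ≤ m → e k = f k := fun k hk hkm =>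
    by_contra fun hk' => Nat.find_min hne (by omega) ⟨hk, hk'⟩
  rw [hm] at hn
  rcases hn.lt_or_gt with hlt | hgt
  · refine (hp.distVal_le_of_lex he hf hagree hlt).lt_of_ne fun heq => h.ne ?_
    exact hq.distVal_eq_of_boundary he hf hagree hq0
      (hp.boundary_of_distVal_eq he hf hagree hlt heq)
  · exact absurd h (hq.distVal_le_of_lex hf he (fun k hk hkm => (hagree k hk hkm).symm) hgt).not_gt

noncomputable def uniformWeights (d : ℕ → ℕ) : ℕ → ℕ → ℝ := fun _ n => (d n : ℝ)⁻¹

section Uniform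

variable {d : ℕ → ℕ}

lemma isDigitWeights_uniformWeights (hd : ∀ n, 1 ≤ n → 0 < d n) :
    IsDigitWeights d (uniformWeights d) where
  pos n _ i hi := inv_pos.2 (Nat.cast_pos.2 (by omega))
  sum_eq_one n hn := by
    simp [uniformWeights, (Nat.cast_pos.2 (hd n hn)).ne']

lemma beta_uniformWeights (i n : ℕ) : beta (uniformWeights d) i n = i / d n := by
  simp [beta, uniformWeights, div_eq_mul_inv]

lemma digitProd_uniformWeights (e : ℕ → ℕ) (n : ℕ) :
    digitProd (uniformWeights d) e n = (∏ j ∈ Icc 1 n, (d j : ℝ))⁻¹ :=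
  prod_inv_distrib _

lemma inv_prod_le_half_pow (hd : ∀ n, 1 ≤ n → 2 ≤ d n) (n : ℕ) :
    (∏ j ∈ Icc 1 n, (d j : ℝ))⁻¹ ≤ (1 / 2) ^ n := by
  have h := prod_le_prod (s := Icc 1 n) (f := fun j => (d j : ℝ)⁻¹) (g := fun _ => 1 / 2)
    (fun j _ => by positivity) fun j hj => by
      have : (2 : ℝ) ≤ d j := by exact_mod_cast hd j (mem_Icc.1 hj).1
      rw [one_div]
      exact inv_anti₀ two_pos this
  simpa [prod_inv_distrib] using h

lemma tendsto_digitProd_uniformWeights (hd : ∀ n, 1 ≤ n → 2 ≤ d n) (e : ℕ → ℕ) :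
    Tendsto (digitProd (uniformWeights d) e) atTop (𝓝 0) :=
  squeeze_zero (fun n => by rw [digitProd_uniformWeights]; positivity)
    (fun n => by rw [digitProd_uniformWeights]; exact inv_prod_le_half_pow hd n)
    (tendsto_pow_atTop_nhds_zero_of_lt_one (by norm_num) (by norm_num))

end Uniform

noncomputable def greedyDigit (k : ℕ) (t : ℝ) : ℕ := min ⌊t⌋₊ (k - 1)

lemma greedyDigit_lt {k : ℕ} (hk : 0 < k) (t : ℝ) : greedyDigit k t < k := by
  unfold greedyDigit
  omega

lemma greedyDigit_le (k : ℕ) {t : ℝ} (ht : 0 ≤ t) : (greedyDigit k t : ℝ) ≤ t :=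
  (Nat.cast_le.2 (min_le_left _ _)).trans (Nat.floor_le ht)

lemma le_greedyDigit_add_one {k : ℕ} {t : ℝ} (hk : 0 < k) (ht : t ≤ k) :
    t ≤ greedyDigit k t + 1 := by
  rcases le_total ⌊t⌋₊ (k - 1) with h | h
  · rw [greedyDigit, min_eq_left h]
    exact (Nat.lt_floor_add_one t).le
  · rw [greedyDigit, min_eq_right h, Nat.cast_sub hk, Nat.cast_one, sub_add_cancel]
    exact ht

/-- `cantorRem d x n = d₁⋯dₙ · (x - ∑_{k ≤ n} eₖ / (d₁⋯dₖ))` for the greedy digits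
`eₖ = cantorDigit d x k`. -/
noncomputable def cantorRem (d : ℕ → ℕ) (x : ℝ) : ℕ → ℝ
  | 0 => x
  | n + 1 => cantorRem d x n * d (n + 1) - greedyDigit (d (n + 1)) (cantorRem d x n * d (n + 1))

noncomputable def cantorDigit (d : ℕ → ℕ) (x : ℝ) : ℕ → ℕ
  | 0 => 0
  | n + 1 => greedyDigit (d (n + 1)) (cantorRem d x n * d (n + 1))

section Cantor

variable {d : ℕ → ℕ} {x : ℝ}

lemma isDigitSeq_cantorDigit (hd : ∀ n, 1 ≤ n → 0 < d n) : IsDigitSeq d (cantorDigit d x)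
  | n + 1, _ => greedyDigit_lt (hd (n + 1) (by omega)) _

lemma cantorRem_mem_Icc (hd : ∀ n, 1 ≤ n → 0 < d n) (hx : x ∈ Set.Icc 0 1) :
    ∀ n, cantorRem d x n ∈ Set.Icc 0 1
  | 0 => hx
  | n + 1 => by
    obtain ⟨h0, h1⟩ := cantorRem_mem_Icc hd hx n
    have hdn : (0 : ℝ) < d (n + 1) := Nat.cast_pos.2 (hd (n + 1) (by omega))
    have ht0 : 0 ≤ cantorRem d x n * d (n + 1) := by positivity
    have ht1 : cantorRem d x n * d (n + 1) ≤ d (n + 1) := by nlinarith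
    have := greedyDigit_le (d (n + 1)) ht0
    have := le_greedyDigit_add_one (hd (n + 1) (by omega)) ht1
    constructor <;> simp only [cantorRem] <;> linarith

lemma sum_distTerm_cantorDigit_add (hd : ∀ n, 1 ≤ n → 0 < d n) (n : ℕ) :
    ∑ k ∈ range n, distTerm (uniformWeights d) (cantorDigit d x) k +
      cantorRem d x n * digitProd (uniformWeights d) (cantorDigit d x) n = x := by
  induction n with
  | zero => simp [cantorRem, digitProd_zero]
  | succ n ih =>
    have hdn : (d (n + 1) : ℝ) ≠ 0 := (Nat.cast_pos.2 (hd (n + 1) (by omega))).ne'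
    have hcancel : cantorRem d x n * d (n + 1) * (d (n + 1) : ℝ)⁻¹ = cantorRem d x n := by
      field_simp
    rw [sum_range_succ, digitProd_succ, distTerm, beta_uniformWeights]
    simp only [cantorRem, cantorDigit, uniformWeights]
    linear_combination ih + digitProd (uniformWeights d) (cantorDigit d x) n * hcancel

lemma exists_distVal_uniformWeights_eq (hd : ∀ n, 1 ≤ n → 2 ≤ d n) (hx : x ∈ Set.Icc 0 1) :
    ∃ e, IsDigitSeq d e ∧ distVal (uniformWeights d) e = x := by
  have hd' : ∀ n, 1 ≤ n → 0 < d n := fun n hn => by have := hd n hn; omega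
  have he := isDigitSeq_cantorDigit (x := x) hd'
  refine ⟨cantorDigit d x, he, tendsto_nhds_unique
    ((isDigitWeights_uniformWeights hd').summable_distTerm he).hasSum.tendsto_sum_nat ?_⟩
  have hrem : Tendsto (fun n => cantorRem d x n * digitProd (uniformWeights d) (cantorDigit d x) n)
      atTop (𝓝 0) := by
    refine squeeze_zero (fun n => ?_) (fun n => ?_)
      (tendsto_digitProd_uniformWeights hd (cantorDigit d x))
    · have := (cantorRem_mem_Icc hd' hx n).1
      rw [digitProd_uniformWeights]
      positivity
    · have := cantorRem_mem_Icc hd' hx n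
      rw [digitProd_uniformWeights]
      exact mul_le_of_le_one_left (by positivity) this.2
  refine (sub_zero x ▸ (tendsto_const_nhds (x := x)).sub hrem).congr fun n => ?_
  exact (eq_sub_of_add_eq (sum_distTerm_cantorDigit_add hd' n)).symm

end Cantor

/-- Nega-digits `ε` become ordinary Cantor digits: a digit at an even place is read backwards. -/
def flipEven (d ε : ℕ → ℕ) (n : ℕ) : ℕ := if Odd n then ε n else d n - 1 - ε n

noncomputable def oddInvProd (d : ℕ → ℕ) (n : ℕ) : ℝ :=
  if Odd n then (∏ j ∈ Icc 1 n, (d j : ℝ))⁻¹ else 0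

section Nega

variable {d ε : ℕ → ℕ}

lemma IsDigitSeq.flipEven (hε : IsDigitSeq d ε) : IsDigitSeq d (flipEven d ε) := fun n hn => by
  have := hε n hn
  unfold _root_.flipEven
  split_ifs <;> omega

lemma flipEven_flipEven (hε : IsDigitSeq d ε) (n : ℕ) (hn : 1 ≤ n) :
    flipEven d (flipEven d ε) n = ε n := by
  have := hε n hn
  unfold flipEven
  split_ifs <;> omega

lemma Ftil_eq_distVal_flipEven {p : ℕ → ℕ → ℝ} (hw : IsDigitWeights d p)
    (hε : IsDigitSeq d ε) : Ftil d p ε = distVal p (flipEven d ε) := by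
  have hterm : ∀ n, betatil d p (ε (n + 2)) (n + 2) * ∏ j ∈ Icc 1 (n + 1), ptil d p (ε j) j =
      distTerm p (flipEven d ε) (n + 1) := fun n => by
    rw [distTerm, digitProd, betatil, flipEven, apply_ite (beta p · (n + 2))]
    congr 1
    exact prod_congr rfl fun j _ => by rw [ptil, flipEven, apply_ite (p · j)]
  rw [Ftil, distVal, (hw.summable_distTerm hε.flipEven).tsum_eq_zero_add, tsum_congr hterm]
  simp [distTerm, flipEven, digitProd_zero]

lemma summable_oddInvProd (hd : ∀ n, 1 ≤ n → 2 ≤ d n) : Summable (oddInvProd d) := by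
  refine Summable.of_nonneg_of_le (fun n => ?_) (fun n => ?_) summable_geometric_two
  · unfold oddInvProd
    split_ifs <;> positivity
  · unfold oddInvProd
    split_ifs
    · exact inv_prod_le_half_pow hd n
    · positivity

/-- Because `(d - 1 - ε) / (d₁⋯dₖ₊₁) = 1 / (d₁⋯dₖ) - (1 + ε) / (d₁⋯dₖ₊₁)`, the nega-series and
the Cantor series of the flipped digits differ by a telescoping series. -/
lemma negaTerm_eq (hd : ∀ n, 1 ≤ n → 2 ≤ d n) (hε : IsDigitSeq d ε) (k : ℕ) :
    (-1 : ℝ) ^ (k + 2) * (1 + (ε (k + 1) : ℝ)) / ∏ j ∈ Icc 1 (k + 1), (d j : ℝ) =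
      distTerm (uniformWeights d) (flipEven d ε) k - (oddInvProd d k - oddInvProd d (k + 1)) := by
  have hε' := hε (k + 1) (by omega)
  have hdk : (0 : ℝ) < d (k + 1) := by have := hd (k + 1) (by omega); positivity
  have hDk : (0 : ℝ) < ∏ j ∈ Icc 1 k, (d j : ℝ) :=
    prod_pos fun j hj => by have := hd j (mem_Icc.1 hj).1; positivity
  rw [distTerm, beta_uniformWeights, digitProd_uniformWeights]
  simp only [oddInvProd, flipEven, Nat.odd_add_one, pow_add, neg_one_sq, mul_one]
  rw [prod_Icc_succ_top (by omega)]
  rcases Nat.even_or_odd k with hk | hk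
  · simp only [hk.neg_one_pow, Nat.not_odd_iff_even.2 hk, not_false_eq_true, if_true, if_false]
    field_simp
    ring
  · have hcast : ((d (k + 1) - 1 - ε (k + 1) : ℕ) : ℝ) = d (k + 1) - 1 - ε (k + 1) := by
      rw [Nat.cast_sub (by omega), Nat.cast_sub (by omega), Nat.cast_one]
    simp only [hk.neg_one_pow, hk, not_true_eq_false, if_true, if_false, hcast]
    field_simp
    ring

lemma negaVal_eq_distVal_flipEven (hd : ∀ n, 1 ≤ n → 2 ≤ d n) (hε : IsDigitSeq d ε) :
    negaVal d ε = distVal (uniformWeights d) (flipEven d ε) := by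
  have hg := summable_oddInvProd hd
  have htel : HasSum (fun k => oddInvProd d k - oddInvProd d (k + 1)) 0 := by
    simpa [oddInvProd] using hg.hasSum.sub ((hasSum_nat_add_iff' 1).2 hg.hasSum)
  have hw := isDigitWeights_uniformWeights (d := d) fun n hn => by have := hd n hn; omega
  rw [negaVal, tsum_congr (negaTerm_eq hd hε),
    ((hw.summable_distTerm hε.flipEven).hasSum.sub htel).tsum_eq, sub_zero, distVal]

end Nega

theorem Ftil_strictMonoOn_general (d : ℕ → ℕ) (hd : ∀ n, 1 ≤ n → 2 ≤ d n)
    (p : ℕ → ℕ → ℝ)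
    (hp : ∀ n, 1 ≤ n → ∀ i, i < d n → 0 < p i n ∧ p i n < 1)
    (hsum : ∀ n, 1 ≤ n → ∑ i ∈ Finset.range (d n), p i n = 1)
    (F : ℝ → ℝ)
    (hF : ∀ x ∈ Set.Icc (0 : ℝ) 1, ∀ ε : ℕ → ℕ, IsNegaRepr d ε x → F x = Ftil d p ε) :
    StrictMonoOn F (Set.Icc (0 : ℝ) 1) := by
  have hw : IsDigitWeights d p := ⟨fun n hn i hi => (hp n hn i hi).1, hsum⟩
  have hu := isDigitWeights_uniformWeights (d := d) fun n hn => by have := hd n hn; omega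
  have hcoord : ∀ x ∈ Set.Icc (0 : ℝ) 1, ∃ e, IsDigitSeq d e ∧
      distVal (uniformWeights d) e = x ∧ F x = distVal p e := by
    intro x hx
    obtain ⟨e, he, hex⟩ := exists_distVal_uniformWeights_eq hd hx
    have hflip := distVal_congr (p := p) (flipEven_flipEven he)
    have hrepr : IsNegaRepr d (flipEven d e) x := ⟨he.flipEven, by
      rw [negaVal_eq_distVal_flipEven hd he.flipEven, distVal_congr (flipEven_flipEven he), hex]⟩
    exact ⟨e, he, hex, by rw [hF x hx _ hrepr, Ftil_eq_distVal_flipEven hw he.flipEven, hflip]⟩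
  intro x hx y hy hxy
  obtain ⟨e, he, rfl, hFx⟩ := hcoord x hx
  obtain ⟨f, hf, rfl, hFy⟩ := hcoord y hy
  rw [hFx, hFy]
  exact distVal_lt_of_distVal_lt hw hu he hf (tendsto_digitProd_uniformWeights hd e) hxy

/-- With all p_{i,n} > 0, column sums 1 and vanishing products, any function
F on [0,1] that agrees with F̃ on nega-(d_n) representations is strictly increasing on [0,1]. -/
theorem Ftil_strictMonoOn (d : ℕ → ℕ) (hd : ∀ n, 1 ≤ n → 2 ≤ d n)
    (p : ℕ → ℕ → ℝ)
    (hp : ∀ n, 1 ≤ n → ∀ i, i < d n → 0 < p i n ∧ p i n < 1)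
    (hsum : ∀ n, 1 ≤ n → ∑ i ∈ Finset.range (d n), p i n = 1)
    (hprod : ∀ ι : ℕ → ℕ, (∀ n, 1 ≤ n → ι n < d n) →
      Filter.Tendsto (fun n => ∏ j ∈ Finset.Icc 1 n, p (ι j) j) Filter.atTop (nhds 0))
    (F : ℝ → ℝ)
    (hF : ∀ x ∈ Set.Icc (0 : ℝ) 1, ∀ ε : ℕ → ℕ, IsNegaRepr d ε x → F x = Ftil d p ε) :
    StrictMonoOn F (Set.Icc (0 : ℝ) 1) :=
  Ftil_strictMonoOn_general d hd p hp hsum F hF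
end
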